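/- arXiv:math/9712211 — 5 statements merged into one kernel-verified Lean document; each statement's English description precedes it below -/
import Mathlib

section
/- In the braid group B_n with Artin generators σ_1,…,σ_{n-1}, define the band generators a_{ts} = (σ_{t-1}σ_{t-2}⋯σ_{s+1}) σ_s (σ_{s+1}^{-1}⋯σ_{t-2}^{-1}σ_{t-1}^{-1}) for n ≥ t > s ≥ 1. Then a_{ts} a_{rq} = a_{rq} a_{ts} whenever (t−r)(t−q)(s−r)(s−q) > 0. -/
/-- Relators for the Artin presentation of the braid group `B n`.
Generator `i : Fin (n-1)` stands for the Artin generator `σ_{i+1}`. -/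
def braidRels (n : ℕ) : Set (FreeGroup (Fin (n - 1))) :=
  {r | (∃ i j : Fin (n - 1), (i : ℕ) + 1 < (j : ℕ) ∧
          r = FreeGroup.of i * FreeGroup.of j * (FreeGroup.of i)⁻¹ * (FreeGroup.of j)⁻¹) ∨
       (∃ i j : Fin (n - 1), (i : ℕ) + 1 = (j : ℕ) ∧
          r = FreeGroup.of i * FreeGroup.of j * FreeGroup.of i *
              (FreeGroup.of j * FreeGroup.of i * FreeGroup.of j)⁻¹)}

/-- The braid group on `n` strands, via the Artin presentation. -/
abbrev Braid (n : ℕ) := PresentedGroup (braidRels n)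

/-- The Artin generator `σ_i` of `B n`, defined for `1 ≤ i ≤ n-1`
(junk value `1` out of range). -/
def sigma (n i : ℕ) : Braid n :=
  if h : i - 1 < n - 1 ∧ 1 ≤ i then PresentedGroup.of ⟨i - 1, h.1⟩ else 1

/-- The band generator
`a_{ts} = (σ_{t-1} ⋯ σ_{s+1}) σ_s (σ_{s+1}⁻¹ ⋯ σ_{t-1}⁻¹)` for `n ≥ t > s ≥ 1`. -/
def band (n t s : ℕ) : Braid n :=
  (((List.range (t - 1 - s)).map (fun k => sigma n (t - 1 - k))).prod) * sigma n s *
    (((List.range (t - 1 - s)).map (fun k => sigma n (t - 1 - k))).prod)⁻¹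

/-- The fundamental element `δ = σ_{n-1} σ_{n-2} ⋯ σ_1`. -/
def delta (n : ℕ) : Braid n :=
  ((List.range (n - 1)).map (fun k => sigma n (n - 1 - k))).prod

lemma rel_one {n : ℕ} {r : FreeGroup (Fin (n-1))} (h : r ∈ braidRels n) :
    (QuotientGroup.mk r : Braid n) = 1 := by
  exact (QuotientGroup.eq_one_iff r).mpr (Subgroup.subset_normalClosure h)
lemma sigma_eq {n i : ℕ} (h1 : 1 ≤ i) (h2 : i ≤ n - 1) :
    sigma n i = (QuotientGroup.mk (FreeGroup.of (⟨i - 1, by omega⟩ : Fin (n-1))) : Braid n) := by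
  rw [sigma, dif_pos ⟨by omega, h1⟩]
  rfl
lemma sigma_comm {n : ℕ} (i j : ℕ) (hij : i + 2 ≤ j) : Commute (sigma n i) (sigma n j) := by
  by_cases hi : 1 ≤ i ∧ i ≤ n - 1
  · by_cases hj : 1 ≤ j ∧ j ≤ n - 1
    · rw [sigma_eq hi.1 hi.2, sigma_eq hj.1 hj.2]
      have hmem : (FreeGroup.of (⟨i-1, by omega⟩ : Fin (n-1)) * FreeGroup.of (⟨j-1, by omega⟩ : Fin (n-1)) *
          (FreeGroup.of (⟨i-1, by omega⟩ : Fin (n-1)))⁻¹ * (FreeGroup.of (⟨j-1, by omega⟩ : Fin (n-1)))⁻¹) ∈ braidRels n := by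
        left; exact ⟨_, _, by simp; omega, rfl⟩
      have := rel_one hmem
      simp only [QuotientGroup.mk_mul, QuotientGroup.mk_inv] at this
      exact commutatorElement_eq_one_iff_commute.mp this
    · have : sigma n j = 1 := by rw [sigma]; rw [dif_neg]; omega
      rw [this]; exact Commute.one_right _
  · have : sigma n i = 1 := by rw [sigma]; rw [dif_neg]; omega
    rw [this]; exact Commute.one_left _
lemma braid_rel {n : ℕ} (i : ℕ) (h1 : 1 ≤ i) (h2 : i + 1 ≤ n - 1) :
    sigma n i * sigma n (i+1) * sigma n i = sigma n (i+1) * sigma n i * sigma n (i+1) := by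
  rw [sigma_eq h1 (by omega), sigma_eq (by omega : 1 ≤ i+1) h2]
  have hmem : (FreeGroup.of (⟨i-1, by omega⟩ : Fin (n-1)) * FreeGroup.of (⟨i+1-1, by omega⟩ : Fin (n-1)) *
      FreeGroup.of (⟨i-1, by omega⟩ : Fin (n-1)) *
      (FreeGroup.of (⟨i+1-1, by omega⟩ : Fin (n-1)) * FreeGroup.of (⟨i-1, by omega⟩ : Fin (n-1)) *
        FreeGroup.of (⟨i+1-1, by omega⟩ : Fin (n-1)))⁻¹) ∈ braidRels n := by
    right; exact ⟨_, _, by simp; omega, rfl⟩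
  have := rel_one hmem
  simp only [QuotientGroup.mk_mul, QuotientGroup.mk_inv] at this
  exact mul_inv_eq_one.mp this
lemma braid_aux1 {G : Type*} [Group G] {a b : G} (h : a*b*a = b*a*b) : b*a*b⁻¹ = a⁻¹*(b*a) := by
  rw [mul_inv_eq_iff_eq_mul, mul_assoc, mul_assoc, ← mul_assoc b a b, ← h]
  group
lemma braid_aux2 {G : Type*} [Group G] {a b : G} (h : a*b*a = b*a*b) : b*a⁻¹*b⁻¹ = a⁻¹*(b⁻¹*a) := by
  have h1 := braid_aux1 h
  have h2 : (b*a*b⁻¹)⁻¹ = (a⁻¹*(b*a))⁻¹ := by rw [h1]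
  calc b*a⁻¹*b⁻¹ = (b*a*b⁻¹)⁻¹ := by group
    _ = (a⁻¹*(b*a))⁻¹ := h2
    _ = a⁻¹*(b⁻¹*a) := by group
lemma band_base {n s : ℕ} : band n (s+1) s = sigma n s := by
  simp [band, show s + 1 - 1 - s = 0 by omega]
lemma band_top {n t s : ℕ} (h : s < t) :
    band n (t+1) s = sigma n t * band n t s * (sigma n t)⁻¹ := by
  have hm : t + 1 - 1 - s = (t - 1 - s) + 1 := by omega
  rw [band, band, hm, List.range_succ_eq_map, List.map_cons, List.prod_cons, List.map_map]
  have he : ((fun k => sigma n (t + 1 - 1 - k)) ∘ Nat.succ) = fun k => sigma n (t - 1 - k) := by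
    funext k; simp only [Function.comp]; congr 1; omega
  rw [he]
  have h0 : t + 1 - 1 - 0 = t := by omega
  rw [h0]
  group
lemma conj_swap {G : Type*} [Group G] {u v x : G} (h : Commute u v) :
    u * (v⁻¹ * x * v) * u⁻¹ = v⁻¹ * (u * x * u⁻¹) * v := by
  calc u * (v⁻¹ * x * v) * u⁻¹ = (u*v⁻¹) * x * (v*u⁻¹) := by group
    _ = (v⁻¹*u) * x * (u⁻¹*v) := by rw [h.inv_right.eq, h.symm.inv_right.eq]
    _ = v⁻¹ * (u*x*u⁻¹) * v := by group
lemma comm_conj {G : Type*} [Group G] {x u y : G} (hu : Commute x u) (hy : Commute x y) :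
    Commute x (u * y * u⁻¹) :=
  (hu.mul_right hy).mul_right hu.inv_right
lemma band_bot {n t s : ℕ} (h2 : s + 2 ≤ t) (hs : 1 ≤ s) (htn : t ≤ n) :
    band n t s = (sigma n s)⁻¹ * band n t (s+1) * sigma n s := by
  induction t, h2 using Nat.le_induction with
  | base =>
    have hb := braid_rel (n := n) s hs (by omega)
    have e1 : band n (s+2) s = sigma n (s+1) * band n (s+1) s * (sigma n (s+1))⁻¹ :=
      band_top (by omega)
    rw [e1, band_base, band_base, braid_aux1 hb]
    group
  | succ t ht IH =>
    have IH' := IH (by omega)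
    have e1 : band n (t+1) s = sigma n t * band n t s * (sigma n t)⁻¹ := band_top (by omega)
    have e2 : band n (t+1) (s+1) = sigma n t * band n t (s+1) * (sigma n t)⁻¹ :=
      band_top (by omega)
    rw [e1, IH', conj_swap (sigma_comm s t (by omega)).symm, e2]
lemma band_far {n t s k : ℕ} (hst : s < t) (h : k + 2 ≤ s ∨ t + 1 ≤ k) :
    Commute (sigma n k) (band n t s) := by
  induction t, hst using Nat.le_induction with
  | base =>
    rw [band_base]
    rcases h with h | h
    · exact sigma_comm k s (by omega)
    · exact (sigma_comm s k (by omega)).symm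
  | succ t ht IH =>
    rw [band_top (by omega)]
    have hkt : Commute (sigma n k) (sigma n t) := by
      rcases h with h | h
      · exact sigma_comm k t (by omega)
      · exact (sigma_comm t k (by omega)).symm
    have hIH : Commute (sigma n k) (band n t s) := by
      apply IH; rcases h with h | h
      · exact Or.inl h
      · exact Or.inr (by omega)
    exact comm_conj hkt hIH
lemma core3 {G : Type*} [Group G] {a b c : G} (h1 : b*c*b = c*b*c) (h2 : Commute a c) :
    Commute b (c*(b*a*b⁻¹)*c⁻¹) := by
  show _ = _
  calc b * (c*(b*a*b⁻¹)*c⁻¹) = (b*c*b) * (a*(b⁻¹*c⁻¹)) := by group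
    _ = (c*b*c) * (a*(b⁻¹*c⁻¹)) := by rw [h1]
    _ = c*b*(c*a)*(b⁻¹*c⁻¹) := by group
    _ = c*b*(a*c)*(b⁻¹*c⁻¹) := by rw [h2.symm.eq]
    _ = c*b*a*(c*b⁻¹*c⁻¹) := by group
    _ = c*b*a*(b⁻¹*(c⁻¹*b)) := by rw [braid_aux2 h1]
    _ = (c*(b*a*b⁻¹)*c⁻¹) * b := by group
lemma band_interior {n : ℕ} : ∀ d s k t : ℕ, t - s = d → 1 ≤ s → t ≤ n → s+1 ≤ k → k+2 ≤ t →
    Commute (sigma n k) (band n t s) := by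
  intro d
  induction d using Nat.strong_induction_on with
  | _ d IH =>
    intro s k t hd hs htn hk1 hk2
    by_cases hkt : k + 3 ≤ t
    · -- peel the top generator
      have ht1 : t = (t-1) + 1 := by omega
      rw [ht1, band_top (by omega : s < t - 1)]
      refine comm_conj (sigma_comm k (t-1) (by omega)) ?_
      exact IH (t-1-s) (by omega) s k (t-1) rfl hs (by omega) hk1 (by omega)
    · have hkt2 : k + 2 = t := by omega
      by_cases hsk : s + 2 ≤ k
      · -- peel the bottom generator
        rw [band_bot (by omega) hs htn]
        have hcs : Commute (sigma n k) (sigma n s) := (sigma_comm s k (by omega)).symm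
        have hin : Commute (sigma n k) (band n t (s+1)) :=
          IH (t-(s+1)) (by omega) (s+1) k t rfl (by omega) htn (by omega) (by omega)
        exact (hcs.inv_right.mul_right hin).mul_right hcs
      · -- base case: k = s+1, t = s+3
        have hk : k = s + 1 := by omega
        have ht : t = s + 3 := by omega
        subst hk ht
        have e1 : band n (s+3) s
            = sigma n (s+2) * (sigma n (s+1) * sigma n s * (sigma n (s+1))⁻¹) * (sigma n (s+2))⁻¹ := by
          rw [show s+3 = (s+2)+1 by rfl, band_top (by omega : s < s+2),
            show s+2 = (s+1)+1 by rfl, band_top (by omega : s < s+1), band_base]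
        rw [e1]
        exact core3 (braid_rel (s+1) (by omega) (by omega)) (sigma_comm s (s+2) (by omega))
lemma band_nested {n t s r q : ℕ} (hq : 1 ≤ q) (hqs : q < s) (hst : s < t) (htr : t < r)
    (hrn : r ≤ n) : Commute (band n t s) (band n r q) := by
  induction t, hst using Nat.le_induction with
  | base =>
    rw [band_base]
    exact band_interior (r - q) q s r rfl hq hrn (by omega) (by omega)
  | succ t ht IH =>
    rw [band_top (by omega)]
    have h1 : Commute (sigma n t) (band n r q) :=
      band_interior (r - q) q t r rfl hq hrn (by omega) (by omega)
    have h2 : Commute (band n t s) (band n r q) := IH (by omega)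
    exact (comm_conj h1.symm h2.symm).symm
lemma band_disjoint {n t s r q : ℕ} (hst : s < t) (htq : t + 1 ≤ q) (hqr : q < r) :
    Commute (band n t s) (band n r q) := by
  induction r, hqr using Nat.le_induction with
  | base => rw [band_base]; exact (band_far hst (Or.inr htq)).symm
  | succ r hr IH =>
    rw [band_top (by omega : q < r)]
    exact comm_conj (band_far hst (Or.inr (by omega))).symm IH

/-- band generators commute when the index pairs do not separate
each other, i.e. when `(t-r)(t-q)(s-r)(s-q) > 0`. -/
theorem band_commute (n t s r q : ℕ)
    (hs : 1 ≤ s) (hst : s < t) (htn : t ≤ n)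
    (hq : 1 ≤ q) (hqr : q < r) (hrn : r ≤ n)
    (hc : ((t : ℤ) - r) * ((t : ℤ) - q) * ((s : ℤ) - r) * ((s : ℤ) - q) > 0) :
    band n t s * band n r q = band n r q * band n t s := by
  rcases lt_trichotomy t q with h | h | h
  · exact (band_disjoint hst (by omega) hqr).eq
  · exfalso; subst h; simp at hc
  · rcases lt_trichotomy r s with h2 | h2 | h2
    · exact (band_disjoint hqr (by omega) hst).symm.eq
    · exfalso; subst h2; simp at hc
    · rcases lt_trichotomy t r with h3 | h3 | h3
      · have hqs : q < s := by
          by_contra hcon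
          push_neg at hcon
          have hA : (t:ℤ) - r < 0 := by omega
          have hB : (0:ℤ) < (t:ℤ) - q := by omega
          have hC : (s:ℤ) - r < 0 := by omega
          have hD : (s:ℤ) - q ≤ 0 := by omega
          have k1 : ((t:ℤ)-r)*((t:ℤ)-q) < 0 := mul_neg_of_neg_of_pos hA hB
          have k2 : 0 < ((t:ℤ)-r)*((t:ℤ)-q)*((s:ℤ)-r) := mul_pos_of_neg_of_neg k1 hC
          have k3 : ((t:ℤ)-r)*((t:ℤ)-q)*((s:ℤ)-r)*((s:ℤ)-q) ≤ 0 :=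
            mul_nonpos_of_nonneg_of_nonpos k2.le hD
          linarith
        exact (band_nested hq hqs hst h3 hrn).eq
      · exfalso; subst h3; simp at hc
      · have hsq : s < q := by
          by_contra hcon
          push_neg at hcon
          have hA : (0:ℤ) < (t:ℤ) - r := by omega
          have hB : (0:ℤ) < (t:ℤ) - q := by omega
          have hC : (s:ℤ) - r < 0 := by omega
          have hD : (0:ℤ) ≤ (s:ℤ) - q := by omega
          have k1 : 0 < ((t:ℤ)-r)*((t:ℤ)-q) := mul_pos hA hB
          have k2 : ((t:ℤ)-r)*((t:ℤ)-q)*((s:ℤ)-r) < 0 := mul_neg_of_pos_of_neg k1 hC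
          have k3 : ((t:ℤ)-r)*((t:ℤ)-q)*((s:ℤ)-r)*((s:ℤ)-q) ≤ 0 :=
            mul_nonpos_of_nonpos_of_nonneg k2.le hD
          linarith
        exact (band_nested hs hsq hqr h3 htn).symm.eq
end

section
/- In the braid group B_n, the band generators satisfy a_{ts} a_{sr} = a_{tr} a_{ts} = a_{sr} a_{tr} for all n ≥ t > s > r ≥ 1. -/
/- ### Auxiliary development -/

namespace BandAux

lemma mk_rel {n : ℕ} {r : FreeGroup (Fin (n - 1))} (h : r ∈ braidRels n) :
    PresentedGroup.mk (braidRels n) r = 1 :=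
  (QuotientGroup.eq_one_iff r).2 (Subgroup.subset_normalClosure h)

lemma sigma_comm (n i j : ℕ) (h : i + 2 ≤ j) :
    sigma n i * sigma n j = sigma n j * sigma n i := by
  unfold sigma
  by_cases hi : i - 1 < n - 1 ∧ 1 ≤ i
  · by_cases hj : j - 1 < n - 1 ∧ 1 ≤ j
    · rw [dif_pos hi, dif_pos hj]
      have hmem : FreeGroup.of (⟨i - 1, hi.1⟩ : Fin (n - 1)) *
          FreeGroup.of (⟨j - 1, hj.1⟩ : Fin (n - 1)) *
          (FreeGroup.of (⟨i - 1, hi.1⟩ : Fin (n - 1)))⁻¹ *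
          (FreeGroup.of (⟨j - 1, hj.1⟩ : Fin (n - 1)))⁻¹ ∈ braidRels n := by
        exact Or.inl ⟨⟨i - 1, hi.1⟩, ⟨j - 1, hj.1⟩, by simp; omega, rfl⟩
      have h1 := mk_rel hmem
      simp only [map_mul, map_inv] at h1
      rw [mul_inv_eq_one, mul_inv_eq_iff_eq_mul] at h1
      exact h1
    · rw [dif_neg hj, mul_one, one_mul]
  · rw [dif_neg hi, mul_one, one_mul]

lemma sigma_braid (n i : ℕ) (h1 : 1 ≤ i) (h2 : i + 1 ≤ n - 1) :
    sigma n i * sigma n (i + 1) * sigma n i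
      = sigma n (i + 1) * sigma n i * sigma n (i + 1) := by
  have hi : i - 1 < n - 1 ∧ 1 ≤ i := ⟨by omega, h1⟩
  have hj : i + 1 - 1 < n - 1 ∧ 1 ≤ i + 1 := ⟨by omega, by omega⟩
  unfold sigma
  rw [dif_pos hi, dif_pos hj]
  have hmem : FreeGroup.of (⟨i - 1, hi.1⟩ : Fin (n - 1)) *
      FreeGroup.of (⟨i + 1 - 1, hj.1⟩ : Fin (n - 1)) *
      FreeGroup.of (⟨i - 1, hi.1⟩ : Fin (n - 1)) *
      (FreeGroup.of (⟨i + 1 - 1, hj.1⟩ : Fin (n - 1)) *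
        FreeGroup.of (⟨i - 1, hi.1⟩ : Fin (n - 1)) *
        FreeGroup.of (⟨i + 1 - 1, hj.1⟩ : Fin (n - 1)))⁻¹ ∈ braidRels n := by
    exact Or.inr ⟨⟨i - 1, hi.1⟩, ⟨i + 1 - 1, hj.1⟩, by simp; omega, rfl⟩
  have h1 := mk_rel hmem
  simp only [map_mul, map_inv] at h1
  rw [mul_inv_eq_one] at h1
  exact h1

/-- The descending product `σ_a σ_{a-1} ⋯ σ_{b+1}`. -/
def P (n a b : ℕ) : Braid n :=
  ((List.range (a - b)).map (fun k => sigma n (a - k))).prod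

lemma band_def (n t s : ℕ) :
    band n t s = P n (t - 1) s * sigma n s * (P n (t - 1) s)⁻¹ := rfl

@[simp] lemma P_self (n a : ℕ) : P n a a = 1 := by simp [P]

lemma P_peel (n a b : ℕ) (h : b < a) : P n a b = sigma n a * P n (a - 1) b := by
  have ha : a - b = (a - 1 - b) + 1 := by omega
  rw [P, ha, List.range_succ_eq_map, List.map_cons, List.prod_cons, List.map_map]
  rw [Nat.sub_zero, P]
  congr 1
  congr 1
  apply List.map_congr_left
  intro k _
  simp only [Function.comp_apply]
  congr 1
  omega

lemma P_split (n : ℕ) : ∀ a b c : ℕ, b ≤ c → c ≤ a → P n a b = P n a c * P n c b := by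
  intro a
  induction a using Nat.strong_induction_on with
  | _ a ih =>
    intro b c hbc hca
    rcases eq_or_lt_of_le hca with he | hlt
    · subst he; simp
    · have hba : b < a := lt_of_le_of_lt hbc hlt
      rw [P_peel n a b hba, P_peel n a c hlt,
        ih (a - 1) (by omega) b c hbc (by omega), mul_assoc]

lemma comm_P (n j a b : ℕ) (h : a + 2 ≤ j) : Commute (sigma n j) (P n a b) := by
  apply Commute.list_prod_right
  intro x hx
  obtain ⟨k, _, rfl⟩ := List.mem_map.1 hx
  exact (sigma_comm n (a - k) j (by omega)).symm

lemma comm_band (n j s r : ℕ) (hj : s + 1 ≤ j) (hrs : r < s) :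
    Commute (sigma n j) (band n s r) := by
  rw [band_def]
  exact ((comm_P n j (s - 1) r (by omega)).mul_right
    (sigma_comm n r j (by omega)).symm).mul_right
    (comm_P n j (s - 1) r (by omega)).inv_right

lemma band_peel (n s r : ℕ) (h : r + 1 < s) :
    band n s r = sigma n (s - 1) * band n (s - 1) r * (sigma n (s - 1))⁻¹ := by
  rw [band_def, band_def, P_peel n (s - 1) r (by omega)]
  group

lemma aux {G : Type*} [Group G] (x y A : G) (h1 : x * A = A * x)
    (h2 : y * x * y = x * y * x) (h3 : y * A * y = A * y * A) :
    x * (y * A * y⁻¹) * x = (y * A * y⁻¹) * x * (y * A * y⁻¹) := by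
  have hc : Commute x A := h1
  have hinv : A * x⁻¹ = x⁻¹ * A := hc.inv_left.eq.symm
  have e : y⁻¹ * x * y = x * y * x⁻¹ := by
    calc y⁻¹ * x * y = y⁻¹ * (x * y * x) * x⁻¹ := by group
      _ = y⁻¹ * (y * x * y) * x⁻¹ := by rw [h2]
      _ = x * y * x⁻¹ := by group
  calc x * (y * A * y⁻¹) * x
      = x * y * A * (y⁻¹ * x * y) * y⁻¹ := by group
    _ = x * y * A * (x * y * x⁻¹) * y⁻¹ := by rw [e]
    _ = x * y * (A * x) * (y * (x⁻¹ * y⁻¹)) := by group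
    _ = x * y * (x * A) * (y * (x⁻¹ * y⁻¹)) := by rw [← h1]
    _ = (x * y * x) * (A * y) * (x⁻¹ * y⁻¹) := by group
    _ = (y * x * y) * (A * y) * (x⁻¹ * y⁻¹) := by rw [← h2]
    _ = y * x * (y * A * y) * (x⁻¹ * y⁻¹) := by group
    _ = y * x * (A * y * A) * (x⁻¹ * y⁻¹) := by rw [h3]
    _ = y * (x * A) * (y * (A * x⁻¹)) * y⁻¹ := by group
    _ = y * (A * x) * (y * (x⁻¹ * A)) * y⁻¹ := by rw [h1, hinv]
    _ = y * A * (x * y * x⁻¹) * (A * y⁻¹) := by group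
    _ = y * A * (y⁻¹ * x * y) * (A * y⁻¹) := by rw [← e]
    _ = (y * A * y⁻¹) * x * (y * A * y⁻¹) := by group

lemma bandBraid (n : ℕ) : ∀ s r : ℕ, 1 ≤ r → r < s → s ≤ n - 1 →
    sigma n s * band n s r * sigma n s = band n s r * sigma n s * band n s r := by
  intro s
  induction s using Nat.strong_induction_on with
  | _ s ih =>
    intro r hr hrs hs
    rcases eq_or_lt_of_le (Nat.succ_le_of_lt hrs) with he | hlt
    · subst he
      have hb : band n (r + 1) r = sigma n r := by
        rw [band_def]
        simp
      rw [hb]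
      exact (sigma_braid n r hr hs).symm
    · rw [band_peel n s r hlt]
      have h1 : sigma n s * band n (s - 1) r = band n (s - 1) r * sigma n s :=
        (comm_band n s (s - 1) r (by omega) (by omega)).eq
      have h2 : sigma n (s - 1) * sigma n s * sigma n (s - 1)
          = sigma n s * sigma n (s - 1) * sigma n s := by
        have hb := sigma_braid n (s - 1) (by omega) (by omega)
        rwa [show s - 1 + 1 = s by omega] at hb
      have h3 := ih (s - 1) (by omega) r hr (by omega) (by omega)
      exact aux _ _ _ h1 h2 h3

end BandAux

open BandAux in
/-- the band relations `a_{ts} a_{sr} = a_{tr} a_{ts} = a_{sr} a_{tr}`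
for all `n ≥ t > s > r ≥ 1`. -/
theorem band_partial_commute (n t s r : ℕ)
    (hr : 1 ≤ r) (hrs : r < s) (hst : s < t) (htn : t ≤ n) :
    band n t s * band n s r = band n t r * band n t s ∧
    band n t r * band n t s = band n s r * band n t r := by
  have hQA : Commute (P n (t - 1) s) (band n s r) := by
    apply Commute.list_prod_left
    intro x hx
    obtain ⟨k, hk, rfl⟩ := List.mem_map.1 hx
    have hk' : k < t - 1 - s := List.mem_range.1 hk
    exact comm_band n (t - 1 - k) s r (by omega) hrs
  have hbts : band n t s = P n (t - 1) s * sigma n s * (P n (t - 1) s)⁻¹ := band_def n t s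
  have hbtr : band n t r
      = P n (t - 1) s * sigma n s * band n s r * (sigma n s)⁻¹ * (P n (t - 1) s)⁻¹ := by
    rw [band_def n t r, P_split n (t - 1) r s (le_of_lt hrs) (by omega),
      P_peel n s r hrs, band_def n s r]
    group
  have hbraid := bandBraid n s r hr hrs (by omega)
  set Q := P n (t - 1) s with hQ
  set A := band n s r with hA
  set x := sigma n s with hx
  have hq : Q * A = A * Q := hQA.eq
  have hq' : Q⁻¹ * A = A * Q⁻¹ := hQA.inv_left.eq
  constructor
  · rw [hbts, hbtr]
    calc Q * x * Q⁻¹ * A = Q * x * (Q⁻¹ * A) := by group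
      _ = Q * x * (A * Q⁻¹) := by rw [hq']
      _ = Q * x * A * x⁻¹ * Q⁻¹ * (Q * x * Q⁻¹) := by group
  · rw [hbts, hbtr]
    calc Q * x * A * x⁻¹ * Q⁻¹ * (Q * x * Q⁻¹)
        = Q * (x * A * x) * x⁻¹ * Q⁻¹ := by group
      _ = Q * (A * x * A) * x⁻¹ * Q⁻¹ := by rw [hbraid]
      _ = (Q * A) * (x * (A * x⁻¹)) * Q⁻¹ := by group
      _ = (A * Q) * (x * (A * x⁻¹)) * Q⁻¹ := by rw [hq]
      _ = A * (Q * x * A * x⁻¹ * Q⁻¹) := by group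
end

section
/- Every element of the braid group B_n can be written in the form δ^p Q where p is an integer and Q is a product of band generators a_{ts} with nonnegative exponents (a positive word in the band generators). -/
namespace BraidAux

lemma rel_eq_one {n : ℕ} {r : FreeGroup (Fin (n-1))} (hr : r ∈ braidRels n) :
    PresentedGroup.mk (braidRels n) r = 1 := by
  exact (QuotientGroup.eq_one_iff r).mpr (Subgroup.subset_normalClosure hr)

lemma sigma_out_low (n : ℕ) : sigma n 0 = 1 := by simp [sigma]

lemma sigma_out_high (n : ℕ) {i : ℕ} (h : n ≤ i) : sigma n i = 1 := by
  rw [sigma, dif_neg]; rintro ⟨h1, h2⟩; omega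

lemma sigma_comm {n : ℕ} {i j : ℕ} (h : i + 1 < j) :
    sigma n i * sigma n j = sigma n j * sigma n i := by
  rcases Nat.eq_zero_or_pos i with hi | hi
  · subst hi; rw [sigma_out_low]; group
  rcases le_or_gt n j with hj | hj
  · rw [sigma_out_high n hj]; group
  have h1 : i - 1 < n - 1 ∧ 1 ≤ i := ⟨by omega, hi⟩
  have h2 : j - 1 < n - 1 ∧ 1 ≤ j := ⟨by omega, by omega⟩
  rw [sigma, dif_pos h1, sigma, dif_pos h2]
  have hr : (FreeGroup.of (⟨i-1, h1.1⟩ : Fin (n-1)) * FreeGroup.of (⟨j-1, h2.1⟩ : Fin (n-1)) *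
      (FreeGroup.of (⟨i-1, h1.1⟩ : Fin (n-1)))⁻¹ * (FreeGroup.of (⟨j-1, h2.1⟩ : Fin (n-1)))⁻¹)
      ∈ braidRels n := Or.inl ⟨_, _, by simp; omega, rfl⟩
  have := rel_eq_one hr
  simp only [map_mul, map_inv] at this
  have h3 : ∀ a b : Braid n, a * b * a⁻¹ * b⁻¹ = 1 → a * b = b * a := by
    intro a b hab
    calc a * b = (a * b * a⁻¹ * b⁻¹) * (b * a) := by group
    _ = b * a := by rw [hab, one_mul]
  exact h3 _ _ this

lemma sigma_braid {n : ℕ} {i : ℕ} (h1 : 1 ≤ i) (h2 : i + 1 ≤ n - 1) :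
    sigma n i * sigma n (i+1) * sigma n i = sigma n (i+1) * sigma n i * sigma n (i+1) := by
  have ha : i - 1 < n - 1 ∧ 1 ≤ i := ⟨by omega, h1⟩
  have hb : (i+1) - 1 < n - 1 ∧ 1 ≤ i + 1 := ⟨by omega, by omega⟩
  rw [sigma, dif_pos ha, sigma, dif_pos hb]
  have hr : (FreeGroup.of (⟨i-1, ha.1⟩ : Fin (n-1)) * FreeGroup.of (⟨i+1-1, hb.1⟩ : Fin (n-1)) *
      FreeGroup.of (⟨i-1, ha.1⟩ : Fin (n-1)) *
      (FreeGroup.of (⟨i+1-1, hb.1⟩ : Fin (n-1)) * FreeGroup.of (⟨i-1, ha.1⟩ : Fin (n-1)) *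
       FreeGroup.of (⟨i+1-1, hb.1⟩ : Fin (n-1)))⁻¹) ∈ braidRels n :=
    Or.inr ⟨_, _, by simp; omega, rfl⟩
  have := rel_eq_one hr
  simp only [map_mul, map_inv] at this
  have h3 : ∀ a b : Braid n, a * b * a * (b * a * b)⁻¹ = 1 → a * b * a = b * a * b := by
    intro a b hab
    have : a * b * a = (a * b * a * (b*a*b)⁻¹) * (b*a*b) := by group
    rw [this, hab, one_mul]
  exact h3 _ _ this

end BraidAux

namespace BraidAux

/-- `down n a m = σ_a σ_{a-1} ⋯ σ_{a-m+1}` (`m` factors). -/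
def down (n : ℕ) : ℕ → ℕ → Braid n
  | _, 0 => 1
  | a, m+1 => sigma n a * down n (a-1) m

lemma down_eq (n a m : ℕ) :
    down n a m = ((List.range m).map (fun k => sigma n (a - k))).prod := by
  induction m generalizing a with
  | zero => simp [down]
  | succ m ih =>
    have hfe : ((fun k => sigma n (a - k)) ∘ Nat.succ) = (fun k => sigma n (a - 1 - k)) := by
      funext k; simp only [Function.comp_apply]; congr 1; omega
    rw [List.range_succ_eq_map, List.map_cons, List.map_map, List.prod_cons, hfe, down, ih, Nat.sub_zero]

lemma band_eq (n t s : ℕ) :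
    band n t s = down n (t-1) (t-1-s) * sigma n s * (down n (t-1) (t-1-s))⁻¹ := by
  rw [band, down_eq]

lemma delta_eq (n : ℕ) : delta n = down n (n-1) (n-1) := by
  rw [delta, down_eq]

lemma down_succ_right (n a m : ℕ) :
    down n a (m+1) = down n a m * sigma n (a - m) := by
  induction m generalizing a with
  | zero => simp [down]
  | succ m ih =>
    have e : a - 1 - m = a - (m+1) := by omega
    rw [down, ih (a-1), down, e, mul_assoc]

lemma down_add (n a m k : ℕ) :
    down n a (m + k) = down n a m * down n (a - m) k := by
  induction m generalizing a with
  | zero => simp [down]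
  | succ m ih =>
    have : a - 1 - m = a - (m+1) := by omega
    rw [Nat.succ_add, down, down, ih, this, mul_assoc]

/-- anything commuting with every letter commutes with `down`. -/
lemma comm_down {n : ℕ} (g : Braid n) {a m : ℕ}
    (h : ∀ k < m, g * sigma n (a - k) = sigma n (a - k) * g) :
    g * down n a m = down n a m * g := by
  induction m generalizing a with
  | zero => simp [down]
  | succ m ih =>
    have h0 := h 0 (by omega)
    rw [Nat.sub_zero] at h0
    rw [down, ← mul_assoc, h0, mul_assoc, ih (fun k hk => by
      have := h (k+1) (by omega)
      rwa [show a - (k+1) = a - 1 - k by omega] at this), ← mul_assoc]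

lemma sigma_comm' {n : ℕ} {i j : ℕ} (h : i + 1 < j ∨ j + 1 < i) :
    sigma n i * sigma n j = sigma n j * sigma n i := by
  rcases h with h | h
  · exact sigma_comm h
  · exact (sigma_comm h).symm

/-- σ_i commutes with `down n a m` when `i+1+m ≤ a` (all letters above `i+1`). -/
lemma sigma_comm_down_low {n : ℕ} {i a m : ℕ} (h : i + 1 + m ≤ a) :
    sigma n i * down n a m = down n a m * sigma n i :=
  comm_down _ (fun k hk => sigma_comm' (Or.inl (by omega)))

/-- σ_i commutes with `down n a m` when `a + 1 < i` (all letters below `i-1`). -/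
lemma sigma_comm_down_high {n : ℕ} {i a m : ℕ} (h : a + 1 < i) :
    sigma n i * down n a m = down n a m * sigma n i :=
  comm_down _ (fun k hk => sigma_comm' (Or.inr (by omega)))

end BraidAux

namespace BraidAux

section helpers
variable {G : Type*} [Group G]

lemma conj_helper1 {a b E : G} (hbE : b * E = E * b) (hbraid : a * b * a = b * a * b) :
    b * (E⁻¹ * a * E) * b⁻¹ = (a*E)⁻¹ * b * (a*E) := by
  have h1 : b * E⁻¹ = E⁻¹ * b := (Commute.inv_right hbE : Commute b E⁻¹)
  have c : Commute b E := hbE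
  have h3 : E * b⁻¹ = b⁻¹ * E := (c.symm.inv_right : Commute E b⁻¹)
  have h2 : b * a * b⁻¹ = a⁻¹ * b * a := by
    rw [mul_inv_eq_iff_eq_mul, eq_comm]
    calc a⁻¹ * b * a * b = a⁻¹ * (b * a * b) := by group
    _ = a⁻¹ * (a * b * a) := by rw [hbraid]
    _ = b * a := by group
  calc b * (E⁻¹ * a * E) * b⁻¹ = (b * E⁻¹) * a * (E * b⁻¹) := by group
  _ = (E⁻¹ * b) * a * (b⁻¹ * E) := by rw [h1, h3]
  _ = E⁻¹ * (b * a * b⁻¹) * E := by group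
  _ = E⁻¹ * (a⁻¹ * b * a) * E := by rw [h2]
  _ = (a*E)⁻¹ * b * (a*E) := by group

lemma conj_helper2 {W V x : G} (h : W * V = V * W) :
    W * (V * (W⁻¹ * x * W) * V⁻¹) * W⁻¹ = V * x * V⁻¹ := by
  calc W * (V * (W⁻¹ * x * W) * V⁻¹) * W⁻¹
      = (W * V) * (W⁻¹ * x * W) * (W * V)⁻¹ := by group
  _ = (V * W) * (W⁻¹ * x * W) * (V * W)⁻¹ := by rw [h]
  _ = V * x * V⁻¹ := by group

lemma conj_mul3 (g D s : G) :
    g * (D * s * D⁻¹) * g⁻¹ = (g * D * g⁻¹) * (g * s * g⁻¹) * (g * D * g⁻¹)⁻¹ := by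
  group

end helpers

/-- `δ σ_{i+1} = σ_i δ` for `1 ≤ i ≤ n-2`. -/
lemma delta_sigma {n i : ℕ} (h1 : 1 ≤ i) (h2 : i + 1 ≤ n - 1) :
    delta n * sigma n (i+1) = sigma n i * delta n := by
  obtain ⟨j, rfl⟩ : ∃ j, i = j + 1 := ⟨i - 1, by omega⟩
  -- split delta
  have e2 : (n-1) - (n-2-(j+1)) = j+2 := by omega
  have key : down n (n-1) (n-1) = down n (n-1) (n-2-(j+1)) * down n (j+2) (j+2) := by
    have hadd := down_add n (n-1) (n-2-(j+1)) (j+2)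
    rw [e2] at hadd
    rw [← hadd]
    congr 1
    omega
  rw [delta_eq, key]
  set D := down n (n-1) (n-2-(j+1)) with hD
  have hE : down n (j+2) (j+2) * sigma n (j+2)
      = sigma n (j+1) * down n (j+2) (j+2) := by
    rw [show down n (j+2) (j+2) = sigma n (j+2) * (sigma n (j+1) * down n j j) from rfl]
    have hW : down n j j * sigma n (j+2) = sigma n (j+2) * down n j j :=
      (sigma_comm_down_high (by omega)).symm
    have hbraid : sigma n (j+1) * sigma n (j+2) * sigma n (j+1)
        = sigma n (j+2) * sigma n (j+1) * sigma n (j+2) := by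
      have := sigma_braid (n := n) (i := j+1) (by omega) (by omega)
      simpa using this
    calc sigma n (j+2) * (sigma n (j+1) * down n j j) * sigma n (j+2)
        = sigma n (j+2) * sigma n (j+1) * (down n j j * sigma n (j+2)) := by group
    _ = sigma n (j+2) * sigma n (j+1) * (sigma n (j+2) * down n j j) := by rw [hW]
    _ = (sigma n (j+2) * sigma n (j+1) * sigma n (j+2)) * down n j j := by group
    _ = (sigma n (j+1) * sigma n (j+2) * sigma n (j+1)) * down n j j := by rw [hbraid]
    _ = sigma n (j+1) * (sigma n (j+2) * (sigma n (j+1) * down n j j)) := by group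
  have hDcomm : sigma n (j+1) * D = D * sigma n (j+1) :=
    sigma_comm_down_low (by omega)
  calc D * down n (j+2) (j+2) * sigma n (j+2)
      = D * (down n (j+2) (j+2) * sigma n (j+2)) := by group
  _ = D * (sigma n (j+1) * down n (j+2) (j+2)) := by rw [hE]
  _ = (D * sigma n (j+1)) * down n (j+2) (j+2) := by group
  _ = (sigma n (j+1) * D) * down n (j+2) (j+2) := by rw [hDcomm]
  _ = sigma n (j+1) * (D * down n (j+2) (j+2)) := by group

/-- `band_{j+1,1}` alternative form. -/
lemma band_alt {n j : ℕ} (h1 : 1 ≤ j) (h2 : j ≤ n - 1) :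
    down n j (j-1) * sigma n 1 * (down n j (j-1))⁻¹
      = (down n (j-1) (j-1))⁻¹ * sigma n j * down n (j-1) (j-1) := by
  induction j with
  | zero => omega
  | succ j ih =>
    cases j with
    | zero => simp [down]
    | succ j' =>
      have ih' := ih (by omega) (by omega)
      have hbE : sigma n (j'+2) * down n j' j' = down n j' j' * sigma n (j'+2) :=
        sigma_comm_down_high (by omega)
      have hbraid : sigma n (j'+1) * sigma n (j'+2) * sigma n (j'+1)
          = sigma n (j'+2) * sigma n (j'+1) * sigma n (j'+2) := by
        have := sigma_braid (n := n) (i := j'+1) (by omega) (by omega)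
        simpa using this
      have e1 : j' + 1 + 1 - 1 = j' + 1 := rfl
      rw [e1]
      rw [show down n (j'+2) (j'+1) = sigma n (j'+2) * down n (j'+1) j' from rfl]
      have lhs_eq : (sigma n (j'+2) * down n (j'+1) j') * sigma n 1 *
            (sigma n (j'+2) * down n (j'+1) j')⁻¹
          = sigma n (j'+2) * (down n (j'+1) j' * sigma n 1 * (down n (j'+1) j')⁻¹) *
            (sigma n (j'+2))⁻¹ := by group
      rw [lhs_eq]
      rw [show (j' + 1 - 1) = j' from rfl] at ih'
      rw [ih']
      rw [show down n (j'+1) (j'+1) = sigma n (j'+1) * down n j' j' from rfl]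
      exact conj_helper1 hbE hbraid

end BraidAux

namespace BraidAux

/-- `δ σ_j δ⁻¹ = σ_{j-1}` for `2 ≤ j ≤ n-1`. -/
lemma delta_conj_sigma {n j : ℕ} (h1 : 2 ≤ j) (h2 : j ≤ n - 1) :
    delta n * sigma n j * (delta n)⁻¹ = sigma n (j-1) := by
  obtain ⟨i, rfl⟩ : ∃ i, j = i + 1 := ⟨j - 1, by omega⟩
  rw [delta_sigma (by omega) (by omega)]
  simp

lemma delta_conj_down {n : ℕ} {a m : ℕ} (hm : m + 1 ≤ a) (ha : a ≤ n - 1) :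
    delta n * down n a m * (delta n)⁻¹ = down n (a-1) m := by
  induction m generalizing a with
  | zero => simp [down]
  | succ m ih =>
    rw [show down n a (m+1) = sigma n a * down n (a-1) m from rfl]
    have step : delta n * (sigma n a * down n (a-1) m) * (delta n)⁻¹
        = (delta n * sigma n a * (delta n)⁻¹) *
          (delta n * down n (a-1) m * (delta n)⁻¹) := by group
    rw [step, delta_conj_sigma (by omega) ha, ih (by omega) (by omega)]
    rw [show down n (a-1) (m+1) = sigma n (a-1) * down n (a-1-1) m from rfl]

/-- `δ σ_1 δ⁻¹ = a_{n,1}` (for `n ≥ 2`). -/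
lemma delta_conj_sigma_one {n : ℕ} (hn : 2 ≤ n) :
    delta n * sigma n 1 * (delta n)⁻¹ = band n n 1 := by
  have e : n - 1 - (n - 2) = 1 := by omega
  have hsplit : down n (n-1) (n-1) = down n (n-1) (n-2) * sigma n 1 := by
    have := down_succ_right n (n-1) (n-2)
    rw [e] at this
    rw [← this]
    congr 1
    omega
  rw [delta_eq, hsplit, band_eq, show n - 1 - 1 = n - 2 from by omega]
  group

/-- `δ a_{t,1} δ⁻¹ = a_{n,t-1}` for `2 ≤ t ≤ n`. -/
lemma delta_conj_band_one {n t : ℕ} (h2 : 2 ≤ t) (hn : t ≤ n) :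
    delta n * band n t 1 * (delta n)⁻¹ = band n n (t-1) := by
  have hband : band n t 1 = down n (t-1) (t-2) * sigma n 1 * (down n (t-1) (t-2))⁻¹ := by
    rw [band_eq, show t - 1 - 1 = t - 2 from by omega]
  rw [hband, conj_mul3, delta_conj_down (by omega) (by omega),
      delta_conj_sigma_one (by omega)]
  rw [show t - 1 - 1 = t - 2 from by omega]
  -- now: down n (t-2) (t-2) * band n n 1 * (down n (t-2) (t-2))⁻¹ = band n n (t-1)
  have hsplit : down n (n-1) (n-2) = down n (n-1) (n-t) * down n (t-1) (t-2) := by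
    have hadd := down_add n (n-1) (n-t) (t-2)
    rw [show n - 1 - (n-t) = t - 1 from by omega] at hadd
    rw [← hadd]
    congr 1
    omega
  have hb1 : band n n 1 = down n (n-1) (n-t) *
      ((down n (t-2) (t-2))⁻¹ * sigma n (t-1) * down n (t-2) (t-2)) *
      (down n (n-1) (n-t))⁻¹ := by
    rw [band_eq, show n - 1 - 1 = n - 2 from by omega, hsplit]
    have halt := band_alt (n := n) (j := t-1) (by omega) (by omega)
    rw [show t - 1 - 1 = t - 2 from by omega] at halt
    rw [← halt]
    group
  rw [hb1]
  have hWV : down n (t-2) (t-2) * down n (n-1) (n-t)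
      = down n (n-1) (n-t) * down n (t-2) (t-2) := by
    apply comm_down
    intro k hk
    exact (sigma_comm_down_high (by omega)).symm
  rw [conj_helper2 hWV]
  rw [band_eq, show n - 1 - (t-1) = n - t from by omega]

/-- `δ a_{t,s} δ⁻¹ = a_{t-1,s-1}` for `2 ≤ s < t ≤ n`. -/
lemma delta_conj_band {n t s : ℕ} (hs : 2 ≤ s) (hst : s < t) (htn : t ≤ n) :
    delta n * band n t s * (delta n)⁻¹ = band n (t-1) (s-1) := by
  rw [band_eq, conj_mul3, delta_conj_down (by omega) (by omega),
      delta_conj_sigma (by omega) (by omega)]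
  rw [band_eq, show t - 1 - 1 = t - 2 from by omega,
      show t - 2 - (s - 1) = t - 1 - s from by omega]

end BraidAux

namespace BraidAux

def Valid (n : ℕ) (x : ℕ × ℕ) : Prop := 1 ≤ x.2 ∧ x.2 < x.1 ∧ x.1 ≤ n

def Pos (n : ℕ) (g : Braid n) : Prop :=
  ∃ L : List (ℕ × ℕ), (∀ x ∈ L, Valid n x) ∧ g = (L.map (fun x => band n x.1 x.2)).prod

lemma pos_one (n : ℕ) : Pos n 1 := ⟨[], by simp, by simp⟩

lemma pos_band {n t s : ℕ} (h : Valid n (t, s)) : Pos n (band n t s) :=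
  ⟨[(t, s)], by simpa using h, by simp⟩

lemma pos_mul {n : ℕ} {g h : Braid n} (hg : Pos n g) (hh : Pos n h) : Pos n (g * h) := by
  obtain ⟨L1, h1, rfl⟩ := hg
  obtain ⟨L2, h2, rfl⟩ := hh
  exact ⟨L1 ++ L2, by
    intro x hx
    rcases List.mem_append.mp hx with hx | hx
    · exact h1 x hx
    · exact h2 x hx, by simp⟩

lemma pos_sigma {n i : ℕ} (h1 : 1 ≤ i) (h2 : i ≤ n - 1) : Pos n (sigma n i) := by
  have hb : band n (i+1) i = sigma n i := by
    rw [band_eq, show i + 1 - 1 - i = 0 from by omega,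
        show i + 1 - 1 = i from by omega]
    simp [down]
  rw [← hb]
  exact pos_band ⟨h1, by omega, by omega⟩

lemma pos_down {n : ℕ} {a m : ℕ} (hm : m ≤ a) (ha : a ≤ n - 1) : Pos n (down n a m) := by
  induction m generalizing a with
  | zero => exact pos_one n
  | succ m ih =>
    rw [show down n a (m+1) = sigma n a * down n (a-1) m from rfl]
    exact pos_mul (pos_sigma (by omega) ha) (ih (by omega) (by omega))

lemma pos_conj_delta_band {n t s : ℕ} (h : Valid n (t, s)) :
    Pos n (delta n * band n t s * (delta n)⁻¹) := by
  obtain ⟨hs, hst, htn⟩ := h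
  rcases Nat.lt_or_ge s 2 with hs2 | hs2
  · have hs1 : s = 1 := by omega
    subst hs1
    rw [delta_conj_band_one (by omega) htn]
    exact pos_band ⟨by omega, by omega, by omega⟩
  · rw [delta_conj_band hs2 hst htn]
    exact pos_band ⟨by omega, by omega, by omega⟩

lemma pos_conj_delta_inv_band {n t s : ℕ} (h : Valid n (t, s)) :
    Pos n ((delta n)⁻¹ * band n t s * delta n) := by
  obtain ⟨hs, hst, htn⟩ := h
  rcases Nat.lt_or_ge t n with htn' | htn'
  · have key := delta_conj_band (n := n) (t := t+1) (s := s+1)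
      (by omega) (by omega) (by omega)
    rw [show t + 1 - 1 = t from by omega, show s + 1 - 1 = s from by omega] at key
    have : (delta n)⁻¹ * band n t s * delta n = band n (t+1) (s+1) := by
      rw [← key]; group
    rw [this]
    exact pos_band ⟨by omega, by omega, by omega⟩
  · have htn'' : t = n := by omega
    subst htn''
    have key := delta_conj_band_one (n := t) (t := s+1) (by omega) (by omega)
    rw [show s + 1 - 1 = s from by omega] at key
    have heq : (delta t)⁻¹ * band t t s * delta t = band t (s+1) 1 := by
      rw [← key]; group
    rw [heq]
    exact pos_band ⟨by omega, by omega, by omega⟩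

lemma pos_conj_delta {n : ℕ} {g : Braid n} (hg : Pos n g) :
    Pos n (delta n * g * (delta n)⁻¹) := by
  obtain ⟨L, hL, rfl⟩ := hg
  induction L with
  | nil => simpa using pos_one n
  | cons x L ih =>
    have step : delta n * ((List.map (fun x => band n x.1 x.2) (x :: L)).prod) * (delta n)⁻¹
        = (delta n * band n x.1 x.2 * (delta n)⁻¹) *
          (delta n * ((List.map (fun x => band n x.1 x.2) L).prod) * (delta n)⁻¹) := by
      simp only [List.map_cons, List.prod_cons]; group
    rw [step]
    exact pos_mul (pos_conj_delta_band (hL x (by simp)))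
      (ih (fun y hy => hL y (by simp [hy])))

lemma pos_conj_delta_inv {n : ℕ} {g : Braid n} (hg : Pos n g) :
    Pos n ((delta n)⁻¹ * g * delta n) := by
  obtain ⟨L, hL, rfl⟩ := hg
  induction L with
  | nil => simpa using pos_one n
  | cons x L ih =>
    have step : (delta n)⁻¹ * ((List.map (fun x => band n x.1 x.2) (x :: L)).prod) * delta n
        = ((delta n)⁻¹ * band n x.1 x.2 * delta n) *
          ((delta n)⁻¹ * ((List.map (fun x => band n x.1 x.2) L).prod) * delta n) := by
      simp only [List.map_cons, List.prod_cons]; group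
    rw [step]
    exact pos_mul (pos_conj_delta_inv_band (hL x (by simp)))
      (ih (fun y hy => hL y (by simp [hy])))

lemma pos_conj_zpow {n : ℕ} (p : ℤ) {g : Braid n} (hg : Pos n g) :
    Pos n (delta n ^ p * g * delta n ^ (-p)) := by
  induction p using Int.induction_on with
  | zero => simpa using hg
  | succ k ih =>
    have step : delta n ^ ((k:ℤ)+1) * g * delta n ^ (-((k:ℤ)+1))
        = delta n * (delta n ^ (k:ℤ) * g * delta n ^ (-(k:ℤ))) * (delta n)⁻¹ := by
      rw [zpow_add, zpow_neg, zpow_neg, zpow_add]; group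
    rw [step]
    exact pos_conj_delta ih
  | pred k ih =>
    have step : delta n ^ (-(k:ℤ)-1) * g * delta n ^ (-(-(k:ℤ)-1))
        = (delta n)⁻¹ * (delta n ^ (-(k:ℤ)) * g * delta n ^ (-(-(k:ℤ)))) * delta n := by
      rw [show (-(-(k:ℤ)-1)) = 1 + -(-(k:ℤ)) from by ring,
          show (-(k:ℤ)-1) = -(k:ℤ) + (-1) from by ring, zpow_add, zpow_add]
      group
    rw [step]
    exact pos_conj_delta_inv ih

lemma sigma_inv {n i : ℕ} (h1 : 1 ≤ i) (h2 : i ≤ n - 1) :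
    ∃ Q, Pos n Q ∧ (sigma n i)⁻¹ = (delta n)⁻¹ * Q := by
  induction i with
  | zero => omega
  | succ i ih =>
    cases i with
    | zero =>
      -- σ_1
      have hn : 2 ≤ n := by omega
      have e : n - 1 - (n - 2) = 1 := by omega
      have hsplit : down n (n-1) (n-1) = down n (n-1) (n-2) * sigma n 1 := by
        have := down_succ_right n (n-1) (n-2)
        rw [e] at this
        rw [← this]
        congr 1
        omega
      refine ⟨down n (n-1) (n-2), pos_down (by omega) (by omega), ?_⟩
      have hd : delta n = down n (n-1) (n-2) * sigma n 1 := by rw [delta_eq, hsplit]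
      rw [hd]; group
    | succ i =>
      obtain ⟨Q, hQ, hQe⟩ := ih (by omega) (by omega)
      have hds := delta_sigma (n := n) (i := i+1) (by omega) (by omega)
      have key : (sigma n (i+1+1))⁻¹ = (delta n)⁻¹ * ((delta n)⁻¹ * Q * delta n) := by
        have h1 : sigma n (i+1+1) = (delta n)⁻¹ * (sigma n (i+1) * delta n) := by
          rw [← hds]; group
        calc (sigma n (i+1+1))⁻¹
            = (delta n)⁻¹ * (sigma n (i+1))⁻¹ * delta n := by rw [h1]; group
        _ = (delta n)⁻¹ * ((delta n)⁻¹ * Q) * delta n := by rw [hQe]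
        _ = (delta n)⁻¹ * ((delta n)⁻¹ * Q * delta n) := by group
      exact ⟨(delta n)⁻¹ * Q * delta n, pos_conj_delta_inv hQ, key⟩

def S (n : ℕ) (g : Braid n) : Prop :=
  ∃ (p : ℤ) (Q : Braid n), Pos n Q ∧ g = delta n ^ p * Q

lemma S_one (n : ℕ) : S n 1 := ⟨0, 1, pos_one n, by simp⟩

lemma S_mul {n : ℕ} {g h : Braid n} (hg : S n g) (hh : S n h) : S n (g * h) := by
  obtain ⟨p, Q, hQ, rfl⟩ := hg
  obtain ⟨q, R, hR, rfl⟩ := hh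
  refine ⟨p + q, (delta n ^ (-q) * Q * delta n ^ (-(-q))) * R,
    pos_mul (pos_conj_zpow (-q) hQ) hR, ?_⟩
  rw [neg_neg, zpow_add]
  group

lemma S_sigma {n : ℕ} (x : Fin (n-1)) :
    S n (PresentedGroup.mk (braidRels n) (FreeGroup.of x)) := by
  have hσ : sigma n ((x:ℕ)+1) = PresentedGroup.mk (braidRels n) (FreeGroup.of x) := by
    have hx : ((x:ℕ)+1) - 1 < n - 1 ∧ 1 ≤ (x:ℕ)+1 := ⟨by have := x.isLt; omega, by omega⟩
    rw [sigma, dif_pos hx]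
    have hfin : (⟨(x:ℕ)+1-1, hx.1⟩ : Fin (n-1)) = x := Fin.ext (by simp)
    rw [hfin]
    rfl
  rw [← hσ]
  exact ⟨0, sigma n ((x:ℕ)+1),
    pos_sigma (by omega) (by have := x.isLt; omega), by simp⟩

lemma S_sigma_inv {n : ℕ} (x : Fin (n-1)) :
    S n ((PresentedGroup.mk (braidRels n) (FreeGroup.of x))⁻¹) := by
  have hσ : sigma n ((x:ℕ)+1) = PresentedGroup.mk (braidRels n) (FreeGroup.of x) := by
    have hx : ((x:ℕ)+1) - 1 < n - 1 ∧ 1 ≤ (x:ℕ)+1 := ⟨by have := x.isLt; omega, by omega⟩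
    rw [sigma, dif_pos hx]
    have hfin : (⟨(x:ℕ)+1-1, hx.1⟩ : Fin (n-1)) = x := Fin.ext (by simp)
    rw [hfin]
    rfl
  rw [← hσ]
  obtain ⟨Q, hQ, hQe⟩ := sigma_inv (n := n) (i := (x:ℕ)+1) (by omega)
    (by have := x.isLt; omega)
  exact ⟨-1, Q, hQ, by rw [hQe, zpow_neg_one]⟩

lemma S_all {n : ℕ} (g : Braid n) : S n g := by
  induction g using PresentedGroup.induction_on with
  | H z =>
    induction z using FreeGroup.induction_on with
    | C1 => simpa using S_one n
    | of x => exact S_sigma x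
    | inv_of x _ => simpa using S_sigma_inv x
    | mul a b ha hb => simpa using S_mul ha hb

end BraidAux

/-- every element of `B_n` is of the form `δ^p Q` with `p : ℤ` and
`Q` a positive word in the band generators. -/
theorem exists_delta_pow_mul_positive (n : ℕ) (g : Braid n) :
    ∃ (p : ℤ) (L : List (ℕ × ℕ)),
      (∀ x ∈ L, 1 ≤ x.2 ∧ x.2 < x.1 ∧ x.1 ≤ n) ∧
      g = delta n ^ p * (L.map (fun x => band n x.1 x.2)).prod := by
  obtain ⟨p, Q, ⟨L, hL, rfl⟩, rfl⟩ := BraidAux.S_all g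
  exact ⟨p, L, hL, rfl⟩
end

section
/- The number of products of pairwise parallel descending cycles on {1,2,…,n} (equivalently, the number of canonical factors in B_n, including the identity) equals the n-th Catalan number C_n = (2n)! / (n!(n+1)!). -/
/-- Two subsets `S, T` of `{0,…,n-1}` are parallel (disjoint and non-interlacing):
for all `a < b` in `S` and `c < d` in `T`, `(a-c)(a-d)(b-c)(b-d) > 0`. -/
def NonInterlacing {n : ℕ} (S T : Finset (Fin n)) : Prop :=
  ∀ a ∈ S, ∀ b ∈ S, ∀ c ∈ T, ∀ d ∈ T, a < b → c < d →
    ((a : ℤ) - (c : ℤ)) * ((a : ℤ) - (d : ℤ)) * ((b : ℤ) - (c : ℤ)) * ((b : ℤ) - (d : ℤ)) > 0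

open Finset

open Finset

/-- order-theoretic non-interlacing of two "intervals" `[a,b]`, `[c,d]` with `a<b`, `c<d`. -/
def NIp (a b c d : ℕ) : Prop := b < c ∨ d < a ∨ (c < a ∧ b < d) ∨ (a < c ∧ d < b)

/-- order-theoretic version of `NonInterlacing` for finsets of naturals. -/
def NI (S T : Finset ℕ) : Prop :=
  ∀ a ∈ S, ∀ b ∈ S, ∀ c ∈ T, ∀ d ∈ T, a < b → c < d → NIp a b c d

open Classical in
/-- all valid families over ground set `I`. -/
noncomputable def fam (I : Finset ℕ) : Finset (Finset (Finset ℕ)) :=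
  I.powerset.powerset.filter fun F =>
    (∀ S ∈ F, 2 ≤ S.card) ∧ (∀ S ∈ F, ∀ T ∈ F, S ≠ T → NI S T)

noncomputable def famCard (k : ℕ) : ℕ := (fam (range k)).card

lemma mem_fam {I : Finset ℕ} {F : Finset (Finset ℕ)} :
    F ∈ fam I ↔ (∀ S ∈ F, S ⊆ I) ∧ (∀ S ∈ F, 2 ≤ S.card) ∧
      (∀ S ∈ F, ∀ T ∈ F, S ≠ T → NI S T) := by
  classical
  simp only [fam, mem_filter, mem_powerset]
  have : F ⊆ I.powerset ↔ ∀ S ∈ F, S ⊆ I := by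
    constructor
    · intro h S hS; exact mem_powerset.1 (h hS)
    · intro h S hS; exact mem_powerset.2 (h S hS)
  rw [this]

lemma NI_mono {S T S' T' : Finset ℕ} (hS : S' ⊆ S) (hT : T' ⊆ T) (h : NI S T) : NI S' T' :=
  fun a ha b hb c hc d hd hab hcd => h a (hS ha) b (hS hb) c (hT hc) d (hT hd) hab hcd

lemma not_mem_both {I : Finset ℕ} {F : Finset (Finset ℕ)} (hF : F ∈ fam I)
    {S T : Finset ℕ} (hS : S ∈ F) (hT : T ∈ F) (hne : S ≠ T) {x : ℕ}
    (hxS : x ∈ S) (hxT : x ∈ T) : False := by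
  obtain ⟨-, hcard, hNI⟩ := mem_fam.1 hF
  obtain ⟨y, hy, hyx⟩ := Finset.exists_mem_ne (lt_of_lt_of_le one_lt_two (hcard S hS)) x
  obtain ⟨z, hz, hzx⟩ := Finset.exists_mem_ne (lt_of_lt_of_le one_lt_two (hcard T hT)) x
  have h1 := hNI S hS T hT hne
  rcases lt_or_gt_of_ne hyx with h2 | h2 <;> rcases lt_or_gt_of_ne hzx with h3 | h3
  · have := h1 y hy x hxS z hz x hxT h2 h3; simp only [NIp] at this; omega
  · have := h1 y hy x hxS x hxT z hz h2 h3; simp only [NIp] at this; omega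
  · have := h1 x hxS y hy z hz x hxT h2 h3; simp only [NIp] at this; omega
  · have := h1 x hxS y hy x hxT z hz h2 h3; simp only [NIp] at this; omega

lemma block_unique {I : Finset ℕ} {F : Finset (Finset ℕ)} (hF : F ∈ fam I)
    {S T : Finset ℕ} (hS : S ∈ F) (hT : T ∈ F) {x : ℕ}
    (hxS : x ∈ S) (hxT : x ∈ T) : S = T := by
  by_contra hne
  exact not_mem_both hF hS hT hne hxS hxT

/-- the block of `F` containing `x` (or `∅`). -/
def blk (F : Finset (Finset ℕ)) (x : ℕ) : Finset ℕ :=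
  F.biUnion fun S => if x ∈ S then S else ∅

lemma mem_blk {F : Finset (Finset ℕ)} {x y : ℕ} :
    y ∈ blk F x ↔ ∃ S ∈ F, x ∈ S ∧ y ∈ S := by
  simp only [blk, mem_biUnion]
  constructor
  · rintro ⟨S, hS, hy⟩
    by_cases h : x ∈ S
    · rw [if_pos h] at hy; exact ⟨S, hS, h, hy⟩
    · rw [if_neg h] at hy; exact absurd hy (notMem_empty y)
  · rintro ⟨S, hS, hx, hy⟩
    exact ⟨S, hS, by rw [if_pos hx]; exact hy⟩

lemma blk_eq_of_mem {I : Finset ℕ} {F : Finset (Finset ℕ)} (hF : F ∈ fam I)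
    {S : Finset ℕ} (hS : S ∈ F) {x : ℕ} (hx : x ∈ S) : blk F x = S := by
  ext y
  rw [mem_blk]
  constructor
  · rintro ⟨T, hT, hxT, hyT⟩
    rwa [block_unique hF hT hS hxT hx] at hyT
  · intro hy; exact ⟨S, hS, hx, hy⟩

lemma blk_eq_empty {F : Finset (Finset ℕ)} {x : ℕ} (h : ∀ S ∈ F, x ∉ S) :
    blk F x = ∅ := by
  ext y
  simp only [mem_blk, notMem_empty, iff_false, not_exists]
  rintro S ⟨hSF, hx, -⟩
  exact h S hSF hx

lemma min_unbot' {s : Finset ℕ} {j : ℕ} (hj : j ∈ s) (h : ∀ x ∈ s, j ≤ x) :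
    s.min.untopD 0 = j := by
  have : s.min = (j : WithTop ℕ) :=
    le_antisymm (min_le hj) (Finset.le_min fun x hx => WithTop.coe_le_coe.2 (h x hx))
  rw [this]; rfl

/-- the "type" of a family: `0` if `0` is uncovered, otherwise the second
smallest element of the block of `0`. -/
def typ (F : Finset (Finset ℕ)) : ℕ := ((blk F 0).erase 0).min.untopD 0
lemma typ_eq_zero {F : Finset (Finset ℕ)} (h : ∀ S ∈ F, 0 ∉ S) : typ F = 0 := by
  simp [typ, blk_eq_empty h]

lemma typ_spec {I : Finset ℕ} {F : Finset (Finset ℕ)} {S : Finset ℕ}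
    (hF : F ∈ fam I) (hS : S ∈ F) (h0 : 0 ∈ S) :
    typ F ∈ S ∧ typ F ≠ 0 ∧ ∀ x ∈ S, x ≠ 0 → typ F ≤ x := by
  obtain ⟨-, hcard, -⟩ := mem_fam.1 hF
  obtain ⟨y, hy, hy0⟩ := Finset.exists_mem_ne (lt_of_lt_of_le one_lt_two (hcard S hS)) 0
  have hne : (S.erase 0).Nonempty := ⟨y, mem_erase.2 ⟨hy0, hy⟩⟩
  have htyp : typ F = (S.erase 0).min' hne := by
    rw [typ, blk_eq_of_mem hF hS h0, ← Finset.coe_min' hne]; rfl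
  have hmem := Finset.min'_mem _ hne
  rw [← htyp, mem_erase] at hmem
  refine ⟨hmem.2, hmem.1, fun x hx hx0 => ?_⟩
  rw [htyp]
  exact Finset.min'_le _ _ (mem_erase.2 ⟨hx0, hx⟩)

lemma typ_eq_zero_iff {I : Finset ℕ} {F : Finset (Finset ℕ)} (hF : F ∈ fam I) :
    typ F = 0 ↔ ∀ S ∈ F, 0 ∉ S := by
  constructor
  · intro h S hS h0
    exact (typ_spec hF hS h0).2.1 h
  · exact typ_eq_zero

lemma image_add_sub (c : ℕ) (S : Finset ℕ) : (S.image (c + ·)).image (· - c) = S := by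
  rw [Finset.image_image]
  have : S.image ((· - c) ∘ (c + ·)) = S.image id := by
    apply Finset.image_congr
    intro x _
    simp [Function.comp]
  rw [this, Finset.image_id]

lemma image_sub_add {c : ℕ} {S : Finset ℕ} (h : ∀ x ∈ S, c ≤ x) :
    (S.image (· - c)).image (c + ·) = S := by
  rw [Finset.image_image]
  have : S.image ((c + ·) ∘ (· - c)) = S.image id := by
    apply Finset.image_congr
    intro x hx
    have := h x hx
    simp only [Function.comp, id]
    omega
  rw [this, Finset.image_id]

lemma add_injective (c : ℕ) : Function.Injective (c + ·) := fun a b h => by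
  simp only at h; omega

lemma NI_image_add {c : ℕ} {S T : Finset ℕ} (h : NI S T) :
    NI (S.image (c + ·)) (T.image (c + ·)) := by
  intro a' ha' b' hb' x' hx' y' hy' hab hxy
  simp only [Finset.mem_image] at ha' hb' hx' hy'
  obtain ⟨a, ha, rfl⟩ := ha'
  obtain ⟨b, hb, rfl⟩ := hb'
  obtain ⟨x, hx, rfl⟩ := hx'
  obtain ⟨y, hy, rfl⟩ := hy'
  have := h a ha b hb x hx y hy (by omega) (by omega)
  simp only [NIp] at *
  omega

lemma NI_image_sub {c : ℕ} {S T : Finset ℕ} (hS : ∀ x ∈ S, c ≤ x) (hT : ∀ x ∈ T, c ≤ x)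
    (h : NI S T) : NI (S.image (· - c)) (T.image (· - c)) := by
  intro a' ha' b' hb' x' hx' y' hy' hab hxy
  simp only [Finset.mem_image] at ha' hb' hx' hy'
  obtain ⟨a, ha, rfl⟩ := ha'
  obtain ⟨b, hb, rfl⟩ := hb'
  obtain ⟨x, hx, rfl⟩ := hx'
  obtain ⟨y, hy, rfl⟩ := hy'
  have h1 := hS a ha; have h2 := hS b hb; have h3 := hT x hx; have h4 := hT y hy
  have := h a ha b hb x hx y hy (by omega) (by omega)
  simp only [NIp] at *
  omega

lemma card_fam_image_add (c : ℕ) (I : Finset ℕ) :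
    (fam (I.image (c + ·))).card = (fam I).card := by
  symm
  apply Finset.card_nbij' (i := fun F => F.image (·.image (c + ·)))
    (j := fun G => G.image (·.image (· - c)))
  · -- forward maps into target
    intro F hF
    obtain ⟨hsub, hcard, hNI⟩ := mem_fam.1 hF
    rw [Finset.mem_coe, mem_fam]
    refine ⟨?_, ?_, ?_⟩
    · intro S' hS'
      obtain ⟨S, hS, rfl⟩ := Finset.mem_image.1 hS'
      exact Finset.image_subset_image (hsub S hS)
    · intro S' hS'
      obtain ⟨S, hS, rfl⟩ := Finset.mem_image.1 hS'
      rw [Finset.card_image_of_injective _ (add_injective c)]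
      exact hcard S hS
    · intro S' hS' T' hT' hne
      obtain ⟨S, hS, rfl⟩ := Finset.mem_image.1 hS'
      obtain ⟨T, hT, rfl⟩ := Finset.mem_image.1 hT'
      exact NI_image_add (hNI S hS T hT (fun h => hne (by rw [h])))
  · -- backward maps into source
    intro G hG
    obtain ⟨hsub, hcard, hNI⟩ := mem_fam.1 hG
    have hge : ∀ S ∈ G, ∀ x ∈ S, c ≤ x := by
      intro S hS x hx
      have := hsub S hS hx
      obtain ⟨i, -, rfl⟩ := Finset.mem_image.1 this
      omega
    rw [Finset.mem_coe, mem_fam]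
    refine ⟨?_, ?_, ?_⟩
    · intro S' hS'
      obtain ⟨S, hS, rfl⟩ := Finset.mem_image.1 hS'
      intro y hy
      obtain ⟨x, hx, rfl⟩ := Finset.mem_image.1 hy
      have := hsub S hS hx
      obtain ⟨i, hi, rfl⟩ := Finset.mem_image.1 this
      simpa [Nat.add_sub_cancel_left] using hi
    · intro S' hS'
      obtain ⟨S, hS, rfl⟩ := Finset.mem_image.1 hS'
      rw [Finset.card_image_of_injOn]
      · exact hcard S hS
      · intro a ha b hb hab
        have := hge S hS a ha; have := hge S hS b hb
        simp only at hab
        omega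
    · intro S' hS' T' hT' hne
      obtain ⟨S, hS, rfl⟩ := Finset.mem_image.1 hS'
      obtain ⟨T, hT, rfl⟩ := Finset.mem_image.1 hT'
      exact NI_image_sub (hge S hS) (hge T hT) (hNI S hS T hT (fun h => hne (by rw [h])))
  · -- left inverse
    intro F _
    dsimp only
    rw [Finset.image_image]
    have : F.image ((·.image (· - c)) ∘ (·.image (c + ·))) = F.image id := by
      apply Finset.image_congr
      intro S _
      simp only [Function.comp, id]
      exact image_add_sub c S
    rw [this, Finset.image_id]
  · -- right inverse
    intro G hG
    obtain ⟨hsub, -, -⟩ := mem_fam.1 hG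
    dsimp only
    rw [Finset.image_image]
    have : G.image ((·.image (c + ·)) ∘ (·.image (· - c))) = G.image id := by
      apply Finset.image_congr
      intro S hS
      simp only [Function.comp, id]
      apply image_sub_add
      intro x hx
      have := hsub S (by simpa using hS) hx
      obtain ⟨i, -, rfl⟩ := Finset.mem_image.1 this
      omega
    rw [this, Finset.image_id]

lemma card_fam_Ico (a b : ℕ) : (fam (Ico a b)).card = famCard (b - a) := by
  rcases le_total a b with h | h
  · have : Ico a b = (range (b - a)).image (a + ·) := by
      rw [range_eq_Ico, image_add_left_Ico, add_zero, Nat.add_sub_cancel' h]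
    rw [this, famCard, card_fam_image_add]
  · rw [Nat.sub_eq_zero_of_le h, famCard, range_zero]
    congr 1
    rw [Finset.Ico_eq_empty (by omega)]

lemma famCard_zero : famCard 0 = 1 := by
  have : fam (range 0) = {∅} := by
    ext F
    rw [mem_fam, Finset.mem_singleton]
    constructor
    · rintro ⟨hsub, hcard, -⟩
      rw [Finset.eq_empty_iff_forall_notMem]
      intro S hS
      have h1 := hsub S hS
      have h2 := hcard S hS
      rw [range_zero, Finset.subset_empty] at h1
      subst h1
      simp at h2
    · rintro rfl
      refine ⟨by simp, by simp, by simp⟩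
  rw [famCard, this, Finset.card_singleton]
/-- forward map of the first-return decomposition at type `j`. -/
noncomputable def fwd (j : ℕ) (F : Finset (Finset ℕ)) :
    Finset (Finset ℕ) × Finset (Finset ℕ) :=
  ((((F.image (fun S => S.erase 0)).filter (fun S => 2 ≤ S.card))).filter
      (fun S => S ⊆ Ico 1 j),
   (((F.image (fun S => S.erase 0)).filter (fun S => 2 ≤ S.card))).filter
      (fun S => ¬ S ⊆ Ico 1 j))

/-- backward map of the first-return decomposition at type `j`. -/
def bwd (j : ℕ) (P : Finset (Finset ℕ) × Finset (Finset ℕ)) : Finset (Finset ℕ) :=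
  P.1 ∪ P.2.erase (blk P.2 j) ∪ {insert 0 (insert j (blk P.2 j))}

lemma covered_of_typ_ne_zero {I : Finset ℕ} {F : Finset (Finset ℕ)}
    (hF : F ∈ fam I) (h : typ F ≠ 0) : ∃ S ∈ F, 0 ∈ S := by
  by_contra hc
  push_neg at hc
  exact h (typ_eq_zero fun S hS => hc S hS)

lemma fwd_mem {n j : ℕ} (hj1 : 1 ≤ j) (hjn : j ≤ n) {F : Finset (Finset ℕ)}
    (hF : F ∈ fam (range (n+1))) (ht : typ F = j) :
    fwd j F ∈ (fam (Ico 1 j)) ×ˢ (fam (Ico j (n+1))) := by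
  obtain ⟨hsub, hcard, hNI⟩ := mem_fam.1 hF
  obtain ⟨S₀, hS₀F, h0S₀⟩ := covered_of_typ_ne_zero hF (by omega)
  have hspec := typ_spec hF hS₀F h0S₀
  rw [ht] at hspec
  obtain ⟨hjS₀, -, hjmin⟩ := hspec
  set G := ((F.image (fun S => S.erase 0)).filter (fun S => 2 ≤ S.card)) with hGdef
  have hGmem : ∀ S' ∈ G, ∃ S ∈ F, S' = S.erase 0 ∧ 2 ≤ S'.card := by
    intro S' hS'
    rw [hGdef, mem_filter, Finset.mem_image] at hS'
    obtain ⟨⟨S, hS, rfl⟩, h2⟩ := hS'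
    exact ⟨S, hS, rfl, h2⟩
  have hGNI : ∀ S' ∈ G, ∀ T' ∈ G, S' ≠ T' → NI S' T' := by
    intro S' hS' T' hT' hne
    obtain ⟨S, hS, rfl, -⟩ := hGmem S' hS'
    obtain ⟨T, hT, rfl, -⟩ := hGmem T' hT'
    have hST : S ≠ T := fun h => hne (by rw [h])
    exact NI_mono (Finset.erase_subset _ _) (Finset.erase_subset _ _) (hNI S hS T hT hST)
  have hGcard : ∀ S' ∈ G, 2 ≤ S'.card := by
    intro S' hS'
    exact (hGmem S' hS').choose_spec.2.2
  have key : ∀ S' ∈ G, ¬ S' ⊆ Ico 1 j → S' ⊆ Ico j (n+1) := by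
    intro S' hS' hnsub
    obtain ⟨S, hSF, rfl, hc2⟩ := hGmem S' hS'
    intro x hx
    rw [Finset.mem_erase] at hx
    obtain ⟨hx0, hxS⟩ := hx
    have hxn : x < n + 1 := mem_range.1 (hsub S hSF hxS)
    rw [mem_Ico]
    refine ⟨?_, hxn⟩
    by_cases hSS₀ : S = S₀
    · subst hSS₀
      exact hjmin x hxS hx0
    · have h0S : 0 ∉ S := fun h => not_mem_both hF hSF hS₀F hSS₀ h h0S₀
      obtain ⟨d, hdS', hd⟩ := Finset.not_subset.1 hnsub
      rw [Finset.mem_erase] at hdS'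
      obtain ⟨hd0, hdS⟩ := hdS'
      rw [mem_Ico] at hd
      push_neg at hd
      have hjd : j ≤ d := hd (by omega)
      have hdj : d ≠ j := fun h => not_mem_both hF hSF hS₀F hSS₀ (h ▸ hdS) hjS₀
      by_contra hxj
      push_neg at hxj
      have hxd : x ≠ d := by omega
      have := hNI S hSF S₀ hS₀F hSS₀ x hxS d hdS 0 h0S₀ j hjS₀ (by omega) (by omega)
      simp only [NIp] at this
      omega
  rw [Finset.mem_product]
  constructor
  · rw [mem_fam]
    refine ⟨fun S' h => (mem_filter.1 h).2, fun S' h => hGcard S' (mem_filter.1 h).1, ?_⟩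
    intro S' hS' T' hT' hne
    exact hGNI S' (mem_filter.1 hS').1 T' (mem_filter.1 hT').1 hne
  · rw [mem_fam]
    refine ⟨fun S' h => key S' (mem_filter.1 h).1 (mem_filter.1 h).2,
      fun S' h => hGcard S' (mem_filter.1 h).1, ?_⟩
    intro S' hS' T' hT' hne
    exact hGNI S' (mem_filter.1 hS').1 T' (mem_filter.1 hT').1 hne
lemma bwd_mem {n j : ℕ} (hj1 : 1 ≤ j) (hjn : j ≤ n)
    {P : Finset (Finset ℕ) × Finset (Finset ℕ)}
    (hP : P ∈ (fam (Ico 1 j)) ×ˢ (fam (Ico j (n+1)))) :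
    bwd j P ∈ fam (range (n+1)) ∧ typ (bwd j P) = j := by
  obtain ⟨G₁, G₂⟩ := P
  rw [Finset.mem_product] at hP
  obtain ⟨hG₁, hG₂⟩ := hP
  obtain ⟨hsub₁, hcard₁, hNI₁⟩ := mem_fam.1 hG₁
  obtain ⟨hsub₂, hcard₂, hNI₂⟩ := mem_fam.1 hG₂
  have hb₁ : ∀ S ∈ G₁, ∀ x ∈ S, 1 ≤ x ∧ x < j := fun S hS x hx => mem_Ico.1 (hsub₁ S hS hx)
  have hb₂ : ∀ S ∈ G₂, ∀ x ∈ S, j ≤ x ∧ x < n+1 := fun S hS x hx => mem_Ico.1 (hsub₂ S hS hx)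
  set B := blk G₂ j with hBdef
  have hBcase : B = ∅ ∨ (B ∈ G₂ ∧ j ∈ B) := by
    by_cases hex : ∃ T ∈ G₂, j ∈ T
    · obtain ⟨T, hT, hjT⟩ := hex
      right
      rw [hBdef, blk_eq_of_mem hG₂ hT hjT]
      exact ⟨hT, hjT⟩
    · left
      push_neg at hex
      exact blk_eq_empty hex
  have hjB' : ∀ T ∈ G₂, T ≠ B → j ∉ T := by
    intro T hT hne hjT
    exact hne (by rw [hBdef, blk_eq_of_mem hG₂ hT hjT])
  have hBsub : ∀ x ∈ B, j ≤ x ∧ x < n+1 := by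
    rcases hBcase with h | h
    · rw [h]; intro x hx; exact absurd hx (notMem_empty x)
    · exact hb₂ B h.1
  have h0notin : 0 ∉ insert j B := by
    rw [Finset.mem_insert]
    rintro (h | h)
    · omega
    · have := hBsub 0 h; omega
  set S₀ := insert 0 (insert j B) with hS₀def
  have hS₀mem : ∀ x ∈ S₀, x = 0 ∨ x = j ∨ x ∈ B := by
    intro x hx
    rw [hS₀def, Finset.mem_insert, Finset.mem_insert] at hx
    tauto
  have hS₀bd : ∀ x ∈ S₀, x = 0 ∨ (j ≤ x ∧ x < n+1) := by
    intro x hx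
    rcases hS₀mem x hx with h | h | h
    · left; exact h
    · right; omega
    · right; exact hBsub x h
  have hmemF' : ∀ T, T ∈ bwd j (G₁, G₂) ↔ (T ∈ G₁ ∨ (T ∈ G₂ ∧ T ≠ B) ∨ T = S₀) := by
    intro T
    simp only [bwd, Finset.mem_union, Finset.mem_erase, Finset.mem_singleton]
    rw [← hBdef, ← hS₀def]
    tauto
  have hfam : bwd j (G₁, G₂) ∈ fam (range (n+1)) := by
    rw [mem_fam]
    refine ⟨?_, ?_, ?_⟩
    · -- subsets
      intro T hT
      rcases (hmemF' T).1 hT with h | h | h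
      · intro x hx; rw [mem_range]; have := hb₁ T h x hx; omega
      · intro x hx; rw [mem_range]; have := hb₂ T h.1 x hx; omega
      · subst h; intro x hx; rw [mem_range]
        rcases hS₀bd x hx with h | h <;> omega
    · -- cards
      intro T hT
      rcases (hmemF' T).1 hT with h | h | h
      · exact hcard₁ T h
      · exact hcard₂ T h.1
      · subst h
        rw [hS₀def, Finset.card_insert_of_notMem h0notin]
        have : 0 < (insert j B).card := Finset.card_pos.2 ⟨j, Finset.mem_insert_self _ _⟩
        omega
    · -- non-interlacing
      intro S hS T hT hne
      rcases (hmemF' S).1 hS with hS1 | hS2 | hS3 <;>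
        rcases (hmemF' T).1 hT with hT1 | hT2 | hT3
      · exact hNI₁ S hS1 T hT1 hne
      · -- G₁ vs G₂
        intro a ha b hb c hc d hd hab hcd
        have h1 := hb₁ S hS1 a ha; have h2 := hb₁ S hS1 b hb
        have h3 := hb₂ T hT2.1 c hc
        simp only [NIp]; omega
      · -- G₁ vs S₀
        subst hT3
        intro a ha b hb c hc d hd hab hcd
        have h1 := hb₁ S hS1 a ha; have h2 := hb₁ S hS1 b hb
        have h3 := hS₀bd c hc; have h4 := hS₀bd d hd
        simp only [NIp]; omega
      · -- G₂ vs G₁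
        intro a ha b hb c hc d hd hab hcd
        have h1 := hb₂ S hS2.1 a ha
        have h3 := hb₁ T hT1 c hc; have h4 := hb₁ T hT1 d hd
        simp only [NIp]; omega
      · exact hNI₂ S hS2.1 T hT2.1 hne
      · -- G₂ (≠ B) vs S₀
        subst hT3
        have hjS : j ∉ S := hjB' S hS2.1 hS2.2
        intro a ha b hb c hc d hd hab hcd
        have h1 := hb₂ S hS2.1 a ha; have h2 := hb₂ S hS2.1 b hb
        have hja : j < a := by
          have : a ≠ j := fun h => hjS (h ▸ ha)
          omega
        have hjb : j < b := by omega
        rcases hS₀mem d hd with rfl | rfl | hdB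
        · simp only [NIp]; omega
        · -- d = j
          have : c = 0 := by
            rcases hS₀mem c hc with h | h | h
            · exact h
            · omega
            · have := hBsub c h; omega
          subst this
          simp only [NIp]; omega
        · -- d ∈ B
          have hdn := hBsub d hdB
          rcases eq_or_ne d j with rfl | hdj
          · -- d = j ∈ B
            have : c = 0 := by
              rcases hS₀mem c hc with h | h | h
              · exact h
              · omega
              · have := hBsub c h; omega
            subst this
            simp only [NIp]; omega
          · have hBmem : B ∈ G₂ ∧ j ∈ B := by
              rcases hBcase with h | h
              · rw [h] at hdB; exact absurd hdB (notMem_empty d)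
              · exact h
            have hmain := hNI₂ S hS2.1 B hBmem.1 hS2.2 a ha b hb j hBmem.2 d hdB hab (by omega)
            rcases hS₀mem c hc with rfl | rfl | hcB
            · simp only [NIp] at hmain ⊢; omega
            · exact hmain
            · exact hNI₂ S hS2.1 B hBmem.1 hS2.2 a ha b hb c hcB d hdB hab hcd
      · -- S₀ vs G₁
        subst hS3
        intro a ha b hb c hc d hd hab hcd
        have h1 := hS₀bd a ha; have h2 := hS₀bd b hb
        have h3 := hb₁ T hT1 c hc; have h4 := hb₁ T hT1 d hd
        simp only [NIp]; omega
      · -- S₀ vs G₂ (≠ B)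
        subst hS3
        have hjT : j ∉ T := hjB' T hT2.1 hT2.2
        intro a ha b hb c hc d hd hab hcd
        have h3 := hb₂ T hT2.1 c hc; have h4 := hb₂ T hT2.1 d hd
        have hjc : j < c := by
          have : c ≠ j := fun h => hjT (h ▸ hc)
          omega
        have hjd : j < d := by omega
        rcases hS₀mem b hb with rfl | rfl | hbB
        · omega
        · -- b = j
          simp only [NIp]; omega
        · have hbn := hBsub b hbB
          rcases eq_or_ne b j with rfl | hbj
          · simp only [NIp]; omega
          · have hBmem : B ∈ G₂ ∧ j ∈ B := by
              rcases hBcase with h | h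
              · rw [h] at hbB; exact absurd hbB (notMem_empty b)
              · exact h
            have hmain := hNI₂ B hBmem.1 T hT2.1 (Ne.symm hT2.2) j hBmem.2 b hbB c hc d hd (by omega) hcd
            rcases hS₀mem a ha with rfl | rfl | haB
            · simp only [NIp] at hmain ⊢; omega
            · exact hmain
            · exact hNI₂ B hBmem.1 T hT2.1 (Ne.symm hT2.2) a haB b hbB c hc d hd hab hcd
      · exact absurd (hS3.trans hT3.symm) hne
  refine ⟨hfam, ?_⟩
  have hS₀F : S₀ ∈ bwd j (G₁, G₂) := (hmemF' S₀).2 (Or.inr (Or.inr rfl))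
  have h0S₀ : 0 ∈ S₀ := Finset.mem_insert_self _ _
  have : blk (bwd j (G₁, G₂)) 0 = S₀ := blk_eq_of_mem hfam hS₀F h0S₀
  rw [typ, this, hS₀def, Finset.erase_insert h0notin]
  apply min_unbot' (Finset.mem_insert_self _ _)
  intro x hx
  rcases Finset.mem_insert.1 hx with rfl | h
  · exact le_refl _
  · exact (hBsub x h).1
lemma bwd_fwd {n j : ℕ} (hj1 : 1 ≤ j) (hjn : j ≤ n) {F : Finset (Finset ℕ)}
    (hF : F ∈ fam (range (n+1))) (ht : typ F = j) : bwd j (fwd j F) = F := by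
  obtain ⟨hsub, hcard, hNI⟩ := mem_fam.1 hF
  obtain ⟨S₀, hS₀F, h0S₀⟩ := covered_of_typ_ne_zero hF (by omega)
  have hspec := typ_spec hF hS₀F h0S₀
  rw [ht] at hspec
  obtain ⟨hjS₀, hj0, hjmin⟩ := hspec
  have hG₂fam : (fwd j F).2 ∈ fam (Ico j (n+1)) :=
    (Finset.mem_product.1 (fwd_mem hj1 hjn hF ht)).2
  set G := ((F.image (fun S => S.erase 0)).filter (fun S => 2 ≤ S.card)) with hGdef
  have hG₁ : (fwd j F).1 = G.filter (fun S => S ⊆ Ico 1 j) := rfl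
  have hG₂ : (fwd j F).2 = G.filter (fun S => ¬ S ⊆ Ico 1 j) := rfl
  have hGmem : ∀ S' ∈ G, ∃ S ∈ F, S' = S.erase 0 ∧ 2 ≤ S'.card := by
    intro S' hS'
    rw [hGdef, mem_filter, Finset.mem_image] at hS'
    obtain ⟨⟨S, hS, rfl⟩, h2⟩ := hS'
    exact ⟨S, hS, rfl, h2⟩
  have hjS₀' : j ∈ S₀.erase 0 := Finset.mem_erase.2 ⟨by omega, hjS₀⟩
  have hjnotIco : j ∉ Ico 1 j := by simp [mem_Ico]
  have hBcase : blk (fwd j F).2 j = ∅ ∨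
      (blk (fwd j F).2 j ∈ (fwd j F).2 ∧ j ∈ blk (fwd j F).2 j) := by
    by_cases hex : ∃ T ∈ (fwd j F).2, j ∈ T
    · obtain ⟨T, hT, hjT⟩ := hex
      right
      rw [blk_eq_of_mem hG₂fam hT hjT]
      exact ⟨hT, hjT⟩
    · left
      push_neg at hex
      exact blk_eq_empty hex
  have claimA : insert j (blk (fwd j F).2 j) = S₀.erase 0 := by
    by_cases hc : 2 ≤ (S₀.erase 0).card
    · have hmemG : S₀.erase 0 ∈ G := by
        rw [hGdef, mem_filter, Finset.mem_image]
        exact ⟨⟨S₀, hS₀F, rfl⟩, hc⟩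
      have hmemG₂ : S₀.erase 0 ∈ (fwd j F).2 := by
        rw [hG₂, mem_filter]
        exact ⟨hmemG, fun h => hjnotIco (h hjS₀')⟩
      rw [blk_eq_of_mem hG₂fam hmemG₂ hjS₀']
      exact Finset.insert_eq_self.2 hjS₀'
    · have hcs : (S₀.erase 0).card = 1 := by
        have h1 := Finset.card_erase_of_mem h0S₀
        have h2 := hcard S₀ hS₀F
        omega
      have hsing : S₀.erase 0 = {j} := by
        obtain ⟨a, ha⟩ := Finset.card_eq_one.1 hcs
        rw [ha] at hjS₀' ⊢
        rw [Finset.mem_singleton] at hjS₀'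
        rw [hjS₀']
      have hblkempty : blk (fwd j F).2 j = ∅ := by
        apply blk_eq_empty
        intro T hT hjT
        rw [hG₂, mem_filter] at hT
        obtain ⟨S, hSF, hTeq, h2⟩ := hGmem T hT.1
        subst hTeq
        rw [Finset.mem_erase] at hjT
        have hSS₀ := block_unique hF hSF hS₀F hjT.2 hjS₀
        rw [hSS₀, hsing] at h2
        simp at h2
      rw [hblkempty, hsing]
      rfl
  have hins : insert 0 (S₀.erase 0) = S₀ := Finset.insert_erase h0S₀
  simp only [bwd]
  rw [claimA, hins]
  ext T
  simp only [Finset.mem_union, Finset.mem_erase, Finset.mem_singleton]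
  constructor
  · rintro ((h | h) | h)
    · rw [hG₁, mem_filter] at h
      obtain ⟨hTG, hTsub⟩ := h
      obtain ⟨S, hSF, hTeq, h2⟩ := hGmem T hTG
      by_cases h0S : 0 ∈ S
      · exfalso
        have hSS₀ := block_unique hF hSF hS₀F h0S h0S₀
        rw [hSS₀] at hTeq
        exact hjnotIco (hTsub (hTeq ▸ hjS₀'))
      · rw [Finset.erase_eq_of_notMem h0S] at hTeq
        rw [hTeq]; exact hSF
    · obtain ⟨hTne, hTG₂⟩ := h
      rw [hG₂, mem_filter] at hTG₂
      obtain ⟨hTG, hTnsub⟩ := hTG₂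
      obtain ⟨S, hSF, hTeq, h2⟩ := hGmem T hTG
      by_cases h0S : 0 ∈ S
      · exfalso
        have hSS₀ := block_unique hF hSF hS₀F h0S h0S₀
        rw [hSS₀] at hTeq
        rcases hBcase with hB | hB
        · rw [hB] at claimA
          have : T = {j} := by rw [hTeq, ← claimA]; rfl
          rw [this] at h2
          simp at h2
        · have hblk : blk (fwd j F).2 j = S₀.erase 0 := by
            rw [← claimA]
            exact (Finset.insert_eq_self.2 hB.2).symm
          exact hTne (hTeq.trans hblk.symm)
      · rw [Finset.erase_eq_of_notMem h0S] at hTeq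
        rw [hTeq]; exact hSF
    · rw [h]; exact hS₀F
  · intro hTF
    by_cases hTS₀ : T = S₀
    · right; exact hTS₀
    · have h0T : 0 ∉ T := fun h => not_mem_both hF hTF hS₀F hTS₀ h h0S₀
      have hTG : T ∈ G := by
        rw [hGdef, mem_filter, Finset.mem_image]
        exact ⟨⟨T, hTF, Finset.erase_eq_of_notMem h0T⟩, hcard T hTF⟩
      by_cases hTsub : T ⊆ Ico 1 j
      · left; left; rw [hG₁, mem_filter]; exact ⟨hTG, hTsub⟩
      · left; right
        refine ⟨?_, by rw [hG₂, mem_filter]; exact ⟨hTG, hTsub⟩⟩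
        intro hTB
        have hsubS₀ : T ⊆ S₀ := by
          intro x hx
          have hx' : x ∈ insert j (blk (fwd j F).2 j) := Finset.mem_insert_of_mem (hTB ▸ hx)
          rw [claimA] at hx'
          exact Finset.erase_subset _ _ hx'
        obtain ⟨x, hx⟩ : T.Nonempty := Finset.card_pos.1 (by have := hcard T hTF; omega)
        exact not_mem_both hF hTF hS₀F hTS₀ hx (hsubS₀ hx)

lemma fwd_bwd {n j : ℕ} (hj1 : 1 ≤ j) (hjn : j ≤ n)
    {P : Finset (Finset ℕ) × Finset (Finset ℕ)}
    (hP : P ∈ (fam (Ico 1 j)) ×ˢ (fam (Ico j (n+1)))) : fwd j (bwd j P) = P := by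
  obtain ⟨G₁, G₂⟩ := P
  rw [Finset.mem_product] at hP
  obtain ⟨hG₁, hG₂⟩ := hP
  obtain ⟨hsub₁, hcard₁, hNI₁⟩ := mem_fam.1 hG₁
  obtain ⟨hsub₂, hcard₂, hNI₂⟩ := mem_fam.1 hG₂
  have hb₁ : ∀ S ∈ G₁, ∀ x ∈ S, 1 ≤ x ∧ x < j := fun S hS x hx => mem_Ico.1 (hsub₁ S hS hx)
  have hb₂ : ∀ S ∈ G₂, ∀ x ∈ S, j ≤ x ∧ x < n+1 := fun S hS x hx => mem_Ico.1 (hsub₂ S hS hx)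
  set B := blk G₂ j with hBdef
  have hBcase : B = ∅ ∨ (B ∈ G₂ ∧ j ∈ B) := by
    by_cases hex : ∃ T ∈ G₂, j ∈ T
    · obtain ⟨T, hT, hjT⟩ := hex
      right
      rw [hBdef, blk_eq_of_mem hG₂ hT hjT]
      exact ⟨hT, hjT⟩
    · left
      push_neg at hex
      exact blk_eq_empty hex
  have hBsub : ∀ x ∈ B, j ≤ x ∧ x < n+1 := by
    rcases hBcase with h | h
    · rw [h]; intro x hx; exact absurd hx (notMem_empty x)
    · exact hb₂ B h.1
  have h0notin : 0 ∉ insert j B := by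
    rw [Finset.mem_insert]
    rintro (h | h)
    · omega
    · have := hBsub 0 h; omega
  set S₀ := insert 0 (insert j B) with hS₀def
  have hmemF' : ∀ T, T ∈ bwd j (G₁, G₂) ↔ (T ∈ G₁ ∨ (T ∈ G₂ ∧ T ≠ B) ∨ T = S₀) := by
    intro T
    simp only [bwd, Finset.mem_union, Finset.mem_erase, Finset.mem_singleton]
    rw [← hBdef, ← hS₀def]
    tauto
  have hG' : ((bwd j (G₁, G₂)).image (fun S => S.erase 0)).filter (fun S => 2 ≤ S.card)
      = G₁ ∪ G₂ := by
    ext T'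
    rw [mem_filter, Finset.mem_image, Finset.mem_union]
    constructor
    · rintro ⟨⟨T, hT, rfl⟩, h2⟩
      rcases (hmemF' T).1 hT with h | h | h
      · left
        have h0T : 0 ∉ T := fun hh => by have := hb₁ T h 0 hh; omega
        rwa [Finset.erase_eq_of_notMem h0T]
      · right
        have h0T : 0 ∉ T := fun hh => by have := hb₂ T h.1 0 hh; omega
        rw [Finset.erase_eq_of_notMem h0T]
        exact h.1
      · subst h
        rw [hS₀def, Finset.erase_insert h0notin] at h2 ⊢
        rcases hBcase with hB | hB
        · exfalso
          rw [hB] at h2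
          simp at h2
        · right
          rw [Finset.insert_eq_self.2 hB.2]
          exact hB.1
    · rintro (h | h)
      · have h0T : 0 ∉ T' := fun hh => by have := hb₁ T' h 0 hh; omega
        exact ⟨⟨T', (hmemF' T').2 (Or.inl h), Finset.erase_eq_of_notMem h0T⟩, hcard₁ T' h⟩
      · by_cases hTB : T' = B
        · have hBG₂ : B ∈ G₂ ∧ j ∈ B := by
            rcases hBcase with hB | hB
            · exfalso
              rw [hTB, hB] at h
              have := hcard₂ ∅ h
              simp at this
            · exact hB
          refine ⟨⟨S₀, (hmemF' S₀).2 (Or.inr (Or.inr rfl)), ?_⟩, hcard₂ T' h⟩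
          rw [hS₀def, Finset.erase_insert h0notin, Finset.insert_eq_self.2 hBG₂.2, hTB]
        · have h0T : 0 ∉ T' := fun hh => by have := hb₂ T' h 0 hh; omega
          exact ⟨⟨T', (hmemF' T').2 (Or.inr (Or.inl ⟨h, hTB⟩)),
            Finset.erase_eq_of_notMem h0T⟩, hcard₂ T' h⟩
  have hnsub₂ : ∀ T ∈ G₂, ¬ T ⊆ Ico 1 j := by
    intro T hT hsub
    obtain ⟨x, hx⟩ := Finset.card_pos.1 (show 0 < T.card by have := hcard₂ T hT; omega)
    have h1 := hb₂ T hT x hx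
    have h2 := mem_Ico.1 (hsub hx)
    omega
  have h1 : (fwd j (bwd j (G₁, G₂))).1 = G₁ := by
    show (((bwd j (G₁, G₂)).image (fun S => S.erase 0)).filter (fun S => 2 ≤ S.card)).filter
        (fun S => S ⊆ Ico 1 j) = G₁
    rw [hG']
    ext T
    rw [mem_filter, Finset.mem_union]
    constructor
    · rintro ⟨h | h, hsub⟩
      · exact h
      · exact absurd hsub (hnsub₂ T h)
    · intro h
      exact ⟨Or.inl h, hsub₁ T h⟩
  have h2 : (fwd j (bwd j (G₁, G₂))).2 = G₂ := by
    show (((bwd j (G₁, G₂)).image (fun S => S.erase 0)).filter (fun S => 2 ≤ S.card)).filter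
        (fun S => ¬ S ⊆ Ico 1 j) = G₂
    rw [hG']
    ext T
    rw [mem_filter, Finset.mem_union]
    constructor
    · rintro ⟨h | h, hnsub⟩
      · exact absurd (hsub₁ T h) hnsub
      · exact h
    · intro h
      exact ⟨Or.inr h, hnsub₂ T h⟩
  exact Prod.ext h1 h2
open Classical in
lemma fiber_pos {n j : ℕ} (hj1 : 1 ≤ j) (hjn : j ≤ n) :
    ((fam (range (n+1))).filter (fun F => typ F = j)).card =
      famCard (j-1) * famCard (n+1-j) := by
  have h1 : famCard (j-1) = (fam (Ico 1 j)).card := by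
    rw [card_fam_Ico]
  have h2 : famCard (n+1-j) = (fam (Ico j (n+1))).card := by
    rw [card_fam_Ico]
  rw [h1, h2, ← Finset.card_product]
  apply Finset.card_nbij' (fwd j) (bwd j)
  · intro F hF
    rw [Finset.mem_coe, mem_filter] at hF
    exact fwd_mem hj1 hjn hF.1 hF.2
  · intro P hP
    rw [Finset.mem_coe, mem_filter]
    exact ⟨(bwd_mem hj1 hjn hP).1, (bwd_mem hj1 hjn hP).2⟩
  · intro F hF
    rw [Finset.mem_coe, mem_filter] at hF
    exact bwd_fwd hj1 hjn hF.1 hF.2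
  · intro P hP
    exact fwd_bwd hj1 hjn hP

open Classical in
lemma fiber_zero (n : ℕ) :
    ((fam (range (n+1))).filter (fun F => typ F = 0)).card = famCard n := by
  have heq : (fam (range (n+1))).filter (fun F => typ F = 0) = fam (Ico 1 (n+1)) := by
    ext F
    rw [mem_filter, mem_fam, mem_fam]
    constructor
    · rintro ⟨⟨hsub, hcard, hNI⟩, ht⟩
      have h0 : ∀ S ∈ F, 0 ∉ S := (typ_eq_zero_iff (mem_fam.2 ⟨hsub, hcard, hNI⟩)).1 ht
      refine ⟨?_, hcard, hNI⟩
      intro S hS x hx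
      have h1 := mem_range.1 (hsub S hS hx)
      have h2 : x ≠ 0 := fun h => h0 S hS (h ▸ hx)
      rw [mem_Ico]; omega
    · rintro ⟨hsub, hcard, hNI⟩
      have hsub' : ∀ S ∈ F, S ⊆ range (n+1) := by
        intro S hS x hx
        have := mem_Ico.1 (hsub S hS hx)
        rw [mem_range]; omega
      refine ⟨⟨hsub', hcard, hNI⟩, ?_⟩
      apply typ_eq_zero
      intro S hS h0
      have := mem_Ico.1 (hsub S hS h0)
      omega
  rw [heq, card_fam_Ico]
  congr 1

open Classical in
lemma famCard_succ (n : ℕ) :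
    famCard (n+1) = ∑ k ∈ range (n+1), famCard k * famCard (n - k) := by
  have h1 : famCard (n+1) =
      ∑ j ∈ range (n+1), ((fam (range (n+1))).filter (fun F => typ F = j)).card := by
    apply Finset.card_eq_sum_card_fiberwise
    intro F hF
    rw [Finset.mem_coe, mem_range]
    by_cases h : typ F = 0
    · omega
    · obtain ⟨S, hS, h0S⟩ := covered_of_typ_ne_zero hF h
      have hspec := typ_spec hF hS h0S
      have := mem_range.1 ((mem_fam.1 hF).1 S hS hspec.1)
      omega
  rw [h1, Finset.sum_range_succ' _ n, Finset.sum_range_succ]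
  have h2 : ∀ i ∈ range n,
      ((fam (range (n+1))).filter (fun F => typ F = i + 1)).card =
        famCard i * famCard (n - i) := by
    intro i hi
    rw [mem_range] at hi
    have e1 : i + 1 - 1 = i := by omega
    have e2 : n + 1 - (i + 1) = n - i := by omega
    rw [fiber_pos (by omega) (by omega), e1, e2]
  rw [Finset.sum_congr rfl h2, fiber_zero, Nat.sub_self, famCard_zero, mul_one]

lemma famCard_eq_catalan (n : ℕ) : famCard n = catalan n := by
  induction n using Nat.strong_induction_on with
  | _ n ih =>
    match n with
    | 0 => rw [famCard_zero, catalan_zero]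
    | Nat.succ m =>
      rw [famCard_succ, catalan_succ]
      rw [← Fin.sum_univ_eq_sum_range (fun i => famCard i * famCard (m - i)) (m+1)]
      apply Finset.sum_congr rfl
      intro i _
      rw [ih i (by omega), ih (m - i) (by omega)]

lemma NIp_iff_prod {a b c d : ℕ} (hab : a < b) (hcd : c < d) :
    ((a : ℤ) - (c : ℤ)) * ((a : ℤ) - (d : ℤ)) * ((b : ℤ) - (c : ℤ)) * ((b : ℤ) - (d : ℤ)) > 0
      ↔ NIp a b c d := by
  have hassoc : ((a : ℤ) - c) * ((a : ℤ) - d) * ((b : ℤ) - c) * ((b : ℤ) - d) =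
      (((a : ℤ) - c) * ((a : ℤ) - d)) * (((b : ℤ) - c) * ((b : ℤ) - d)) := by ring
  simp only [NIp]
  constructor
  · intro h
    by_contra hc
    push_neg at hc
    have hcases : a = c ∨ a = d ∨ b = c ∨ b = d ∨ (a < c ∧ c < b ∧ b < d) ∨
        (c < a ∧ a < d ∧ d < b) := by omega
    rcases hcases with h1 | h1 | h1 | h1 | ⟨h1, h2, h3⟩ | ⟨h1, h2, h3⟩
    · rw [show ((a : ℤ) - c) = 0 by omega] at h; simp at h
    · rw [show ((a : ℤ) - d) = 0 by omega] at h; simp at h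
    · rw [show ((b : ℤ) - c) = 0 by omega] at h; simp at h
    · rw [show ((b : ℤ) - d) = 0 by omega] at h; simp at h
    · rw [hassoc] at h
      have p1 : 0 < ((a : ℤ) - c) * ((a : ℤ) - d) :=
        mul_pos_of_neg_of_neg (by omega) (by omega)
      have p2 : ((b : ℤ) - c) * ((b : ℤ) - d) < 0 :=
        mul_neg_of_pos_of_neg (by omega) (by omega)
      nlinarith
    · rw [hassoc] at h
      have p1 : ((a : ℤ) - c) * ((a : ℤ) - d) < 0 :=
        mul_neg_of_pos_of_neg (by omega) (by omega)
      have p2 : 0 < ((b : ℤ) - c) * ((b : ℤ) - d) :=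
        mul_pos (by omega) (by omega)
      nlinarith
  · intro h
    rw [hassoc]
    rcases h with h1 | h1 | ⟨h1, h2⟩ | ⟨h1, h2⟩
    · exact mul_pos (mul_pos_of_neg_of_neg (by omega) (by omega))
        (mul_pos_of_neg_of_neg (by omega) (by omega))
    · exact mul_pos (mul_pos (by omega) (by omega)) (mul_pos (by omega) (by omega))
    · exact mul_pos_of_neg_of_neg (mul_neg_of_pos_of_neg (by omega) (by omega))
        (mul_neg_of_pos_of_neg (by omega) (by omega))
    · exact mul_pos (mul_pos_of_neg_of_neg (by omega) (by omega))
        (mul_pos (by omega) (by omega))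

lemma nonInterlacing_iff {n : ℕ} {S T : Finset (Fin n)} :
    NonInterlacing S T ↔ NI (S.image Fin.val) (T.image Fin.val) := by
  constructor
  · intro h a' ha' b' hb' c' hc' d' hd' hab hcd
    obtain ⟨a, ha, rfl⟩ := Finset.mem_image.1 ha'
    obtain ⟨b, hb, rfl⟩ := Finset.mem_image.1 hb'
    obtain ⟨c, hc, rfl⟩ := Finset.mem_image.1 hc'
    obtain ⟨d, hd, rfl⟩ := Finset.mem_image.1 hd'
    exact (NIp_iff_prod hab hcd).1
      (h a ha b hb c hc d hd (Fin.lt_def.2 hab) (Fin.lt_def.2 hcd))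
  · intro h a ha b hb c hc d hd hab hcd
    exact (NIp_iff_prod (Fin.lt_def.1 hab) (Fin.lt_def.1 hcd)).2
      (h a.val (Finset.mem_image_of_mem _ ha) b.val (Finset.mem_image_of_mem _ hb)
        c.val (Finset.mem_image_of_mem _ hc) d.val (Finset.mem_image_of_mem _ hd)
        (Fin.lt_def.1 hab) (Fin.lt_def.1 hcd))

lemma image_val_mem_fam {n : ℕ} {F : Finset (Finset (Fin n))}
    (h : (∀ S ∈ F, 2 ≤ S.card) ∧ ∀ S ∈ F, ∀ T ∈ F, S ≠ T → NonInterlacing S T) :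
    F.image (fun S => S.image Fin.val) ∈ fam (range n) := by
  rw [mem_fam]
  refine ⟨?_, ?_, ?_⟩
  · intro S' hS'
    obtain ⟨S, hS, rfl⟩ := Finset.mem_image.1 hS'
    intro x hx
    obtain ⟨a, -, rfl⟩ := Finset.mem_image.1 hx
    exact mem_range.2 a.isLt
  · intro S' hS'
    obtain ⟨S, hS, rfl⟩ := Finset.mem_image.1 hS'
    rw [Finset.card_image_of_injective _ Fin.val_injective]
    exact h.1 S hS
  · intro S' hS' T' hT' hne
    obtain ⟨S, hS, rfl⟩ := Finset.mem_image.1 hS'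
    obtain ⟨T, hT, rfl⟩ := Finset.mem_image.1 hT'
    exact nonInterlacing_iff.1 (h.2 S hS T hT (fun hh => hne (by rw [hh])))

theorem card_canonical_factors' (n : ℕ) :
    Nat.card {F : Finset (Finset (Fin n)) //
        (∀ S ∈ F, 2 ≤ S.card) ∧ ∀ S ∈ F, ∀ T ∈ F, S ≠ T → NonInterlacing S T} =
      catalan n := by
  rw [← famCard_eq_catalan]
  rcases Nat.eq_zero_or_pos n with rfl | hn
  · rw [famCard_zero]
    have huniq : ∀ (F : Finset (Finset (Fin 0))),
        ((∀ S ∈ F, 2 ≤ S.card) ∧ ∀ S ∈ F, ∀ T ∈ F, S ≠ T → NonInterlacing S T) → F = ∅ := by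
      intro F hF
      rw [Finset.eq_empty_iff_forall_notMem]
      intro S hS
      have h2 := hF.1 S hS
      have : S = ∅ := Finset.eq_empty_of_isEmpty S
      rw [this] at h2
      simp at h2
    haveI : Unique {F : Finset (Finset (Fin 0)) //
        (∀ S ∈ F, 2 ≤ S.card) ∧ ∀ S ∈ F, ∀ T ∈ F, S ≠ T → NonInterlacing S T} :=
      { default := ⟨∅, by simp, by simp⟩
        uniq := fun F => Subtype.ext (huniq F.1 F.2) }
    exact Nat.card_unique
  · -- n positive
    have hbij : Function.Bijective
        (fun F : {F : Finset (Finset (Fin n)) //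
            (∀ S ∈ F, 2 ≤ S.card) ∧ ∀ S ∈ F, ∀ T ∈ F, S ≠ T → NonInterlacing S T} =>
          (⟨F.1.image (fun S => S.image Fin.val), image_val_mem_fam F.2⟩ :
            {G // G ∈ fam (range n)})) := by
      constructor
      · intro F₁ F₂ h
        apply Subtype.ext
        have := congrArg Subtype.val h
        simp only at this
        exact Finset.image_injective (Finset.image_injective Fin.val_injective) this
      · rintro ⟨G, hG⟩
        obtain ⟨hsub, hcard, hNI⟩ := mem_fam.1 hG
        set g : ℕ → Fin n := fun m => ⟨m % n, Nat.mod_lt m hn⟩ with hg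
        have hval : ∀ S ∈ G, ∀ x ∈ S, (g x).val = x := by
          intro S hS x hx
          have := mem_range.1 (hsub S hS hx)
          simp [hg, Nat.mod_eq_of_lt this]
        have hback : ∀ S ∈ G, (S.image g).image Fin.val = S := by
          intro S hS
          rw [Finset.image_image]
          have : S.image (Fin.val ∘ g) = S.image id := by
            apply Finset.image_congr
            intro x hx
            simp only [Function.comp, id]
            exact hval S hS x hx
          rw [this, Finset.image_id]
        have hinjOn : ∀ S ∈ G, Set.InjOn g S := by
          intro S hS x hx y hy hxy
          have h1 := hval S hS x hx
          have h2 := hval S hS y hy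
          rw [← h1, ← h2, hxy]
        refine ⟨⟨G.image (fun S => S.image g), ?_, ?_⟩, ?_⟩
        · -- cards
          intro S' hS'
          obtain ⟨S, hS, rfl⟩ := Finset.mem_image.1 hS'
          rw [Finset.card_image_of_injOn (hinjOn S hS)]
          exact hcard S hS
        · -- non-interlacing
          intro S' hS' T' hT' hne
          obtain ⟨S, hS, rfl⟩ := Finset.mem_image.1 hS'
          obtain ⟨T, hT, rfl⟩ := Finset.mem_image.1 hT'
          rw [nonInterlacing_iff, hback S hS, hback T hT]
          exact hNI S hS T hT (fun hh => hne (by rw [hh]))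
        · -- maps back to G
          apply Subtype.ext
          simp only
          rw [Finset.image_image]
          have : G.image ((fun S : Finset (Fin n) => S.image Fin.val) ∘
              (fun S => S.image g)) = G.image id := by
            apply Finset.image_congr
            intro S hS
            simp only [Function.comp, id]
            exact hback S hS
          rw [this, Finset.image_id]
    rw [Nat.card_eq_of_bijective _ hbij]
    rw [show famCard n = (fam (range n)).card from rfl]
    exact Nat.card_eq_finsetCard (fam (range n))

/-- the number of collections of pairwise parallel descending cycles
on `{1,…,n}` (identifying a descending cycle with its underlying set of size `≥ 2`,
and including the empty collection) is the `n`-th Catalan number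
`C_n = (2n)! / (n!(n+1)!)`. -/
theorem card_canonical_factors (n : ℕ) :
    Nat.card {F : Finset (Finset (Fin n)) //
        (∀ S ∈ F, 2 ≤ S.card) ∧ ∀ S ∈ F, ∀ T ∈ F, S ≠ T → NonInterlacing S T} =
      catalan n ∧
    catalan n = (2 * n).factorial / (n.factorial * (n + 1).factorial) := by
  constructor
  · exact card_canonical_factors' n
  · rw [catalan_eq_centralBinom_div, Nat.centralBinom,
      Nat.choose_eq_factorial_div_factorial (by omega : n ≤ 2 * n),
      Nat.div_div_eq_div_mul]
    congr 1
    rw [show 2 * n - n = n by omega, Nat.factorial_succ]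
    ring
end

section
/- A permutation π of {1,…,n} is a product of pairwise parallel descending cycles if and only if π is the permutation of a noncrossing partition: that is, the orbits of π are pairwise non-interlacing subsets of {1,…,n} and π maps each orbit by the unique cycle that sends each element to the next smaller element of the orbit (cyclically, with minimum mapping to maximum). -/
/-- Two subsets `S, T` of `Fin n` are non-interlacing (and disjoint): for all `a < b`
in `S` and `c < d` in `T`, `(a-c)(a-d)(b-c)(b-d) > 0`. -/
def NonInterlacingS {n : ℕ} (S T : Set (Fin n)) : Prop :=
  ∀ a ∈ S, ∀ b ∈ S, ∀ c ∈ T, ∀ d ∈ T, a < b → c < d →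
    ((a : ℤ) - (c : ℤ)) * ((a : ℤ) - (d : ℤ)) * ((b : ℤ) - (c : ℤ)) * ((b : ℤ) - (d : ℤ)) > 0

/-- `π` maps each of its orbits descendingly: every point is fixed, or is sent to the
next smaller element of its orbit, or is the minimum of its orbit and is sent to the
maximum of its orbit. -/
def DescSteps {n : ℕ} (π : Equiv.Perm (Fin n)) : Prop :=
  ∀ x : Fin n,
    π x = x ∨
    (π x < x ∧ ∀ y : Fin n, π.SameCycle x y → ¬(π x < y ∧ y < x)) ∨
    ((∀ y : Fin n, π.SameCycle x y → x ≤ y) ∧ (∀ y : Fin n, π.SameCycle x y → y ≤ π x))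

/-- A descending cycle: a cyclic permutation `(t_j, …, t_1)` with `t_j > ⋯ > t_1`,
sending each element of its support to the next smaller one (cyclically). -/
def IsDescendingCycle {n : ℕ} (c : Equiv.Perm (Fin n)) : Prop :=
  c.IsCycle ∧ DescSteps c

lemma NonInterlacingS.symm' {n} {S T : Set (Fin n)} (h : NonInterlacingS S T) :
    NonInterlacingS T S := by
  intro a ha b hb c hc d hd hab hcd
  have := h c hc d hd a ha b hb hcd hab
  nlinarith [this]

open Equiv Equiv.Perm in
lemma sameCycle_iff_mem_support {n} {c : Equiv.Perm (Fin n)} (hc : c.IsCycle) {x : Fin n}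
    (hx : x ∈ c.support) (y : Fin n) : c.SameCycle x y ↔ y ∈ c.support := by
  constructor
  · rintro ⟨k, rfl⟩; rwa [zpow_apply_mem_support]
  · intro hy; exact hc.sameCycle (mem_support.mp hx) (mem_support.mp hy)

open Equiv Equiv.Perm in
lemma factor_props {n} {π c : Equiv.Perm (Fin n)} (hc : c ∈ π.cycleFactorsFinset) {x : Fin n}
    (hx : x ∈ c.support) :
    π x = c x ∧ ∀ y, (π.SameCycle x y ↔ c.SameCycle x y) := by
  obtain ⟨hcyc, happ⟩ := mem_cycleFactorsFinset_iff.mp hc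
  have hpx : π x = c x := (happ x hx).symm
  have hxπ : x ∈ π.support := by
    rw [mem_support, hpx]; exact mem_support.mp hx
  have hco : c = π.cycleOf x := cycle_is_cycleOf hx hc
  refine ⟨hpx, fun y => ?_⟩
  rw [sameCycle_iff_mem_support hcyc hx y, hco, mem_support_cycleOf_iff]
  exact (and_iff_left hxπ).symm

lemma desc_at_transfer {n} {π σ : Equiv.Perm (Fin n)} {x : Fin n}
    (h1 : π x = σ x) (h2 : ∀ y, π.SameCycle x y ↔ σ.SameCycle x y)
    (h : π x = x ∨
      (π x < x ∧ ∀ y : Fin n, π.SameCycle x y → ¬(π x < y ∧ y < x)) ∨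
      ((∀ y : Fin n, π.SameCycle x y → x ≤ y) ∧ (∀ y : Fin n, π.SameCycle x y → y ≤ π x))) :
    σ x = x ∨
      (σ x < x ∧ ∀ y : Fin n, σ.SameCycle x y → ¬(σ x < y ∧ y < x)) ∨
      ((∀ y : Fin n, σ.SameCycle x y → x ≤ y) ∧ (∀ y : Fin n, σ.SameCycle x y → y ≤ σ x)) := by
  rw [← h1]
  simp only [← h2]
  exact h

open Equiv Equiv.Perm in
lemma disjoint_of_noninterlacing {n} {c d : Equiv.Perm (Fin n)} (hc : c.IsCycle) (hd : d.IsCycle)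
    (h : NonInterlacingS {x | c x ≠ x} {x | d x ≠ x}) : c.Disjoint d := by
  rw [disjoint_iff_disjoint_support, Finset.disjoint_left]
  intro x hxc hxd
  obtain ⟨y, hy, hyx⟩ := Finset.exists_mem_ne (lt_of_lt_of_le one_lt_two hc.two_le_card_support) x
  obtain ⟨z, hz, hzx⟩ := Finset.exists_mem_ne (lt_of_lt_of_le one_lt_two hd.two_le_card_support) x
  have hx1 : x ∈ {x | c x ≠ x} := mem_support.mp hxc
  have hx2 : x ∈ {x | d x ≠ x} := mem_support.mp hxd
  have hy1 : y ∈ {x | c x ≠ x} := mem_support.mp hy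
  have hz1 : z ∈ {x | d x ≠ x} := mem_support.mp hz
  rcases lt_or_gt_of_ne hyx with h1 | h1 <;> rcases lt_or_gt_of_ne hzx with h2 | h2
  · have := h y hy1 x hx1 z hz1 x hx2 h1 h2; simp at this
  · have := h y hy1 x hx1 x hx2 z hz1 h1 h2; simp at this
  · have := h x hx1 y hy1 z hz1 x hx2 h1 h2; simp at this
  · have := h x hx1 y hy1 x hx2 z hz1 h1 h2; simp at this

open Equiv Equiv.Perm

/-- a permutation of `{1,…,n}` is a product of pairwise parallel
descending cycles iff its orbits are pairwise non-interlacing and it maps each orbit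
by the unique descending cycle on that orbit. -/
theorem prod_parallel_descending_iff (n : ℕ) (π : Equiv.Perm (Fin n)) :
    (∃ L : List (Equiv.Perm (Fin n)),
        (∀ c ∈ L, IsDescendingCycle c) ∧
        L.Pairwise (fun c d => NonInterlacingS {x | c x ≠ x} {x | d x ≠ x}) ∧
        L.prod = π) ↔
    ((∀ x y : Fin n, ¬π.SameCycle x y →
        NonInterlacingS {z | π.SameCycle x z} {z | π.SameCycle y z}) ∧
      DescSteps π) := by
  constructor
  · rintro ⟨L, hdesc, hpair, rfl⟩
    have hcycles : ∀ c ∈ L, c.IsCycle := fun c h => (hdesc c h).1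
    have hdisj : L.Pairwise Equiv.Perm.Disjoint :=
      hpair.imp_of_mem (fun {a b} ha hb h =>
        disjoint_of_noninterlacing (hcycles a ha) (hcycles b hb) h)
    have hnodup : L.Nodup := by
      refine List.Pairwise.imp_of_mem ?_ hdisj
      intro a b ha hb h heq
      subst heq
      exact (hcycles a ha).ne_one (disjoint_refl_iff.mp h)
    have hfact : L.prod.cycleFactorsFinset = L.toFinset :=
      (cycleFactorsFinset_eq_list_toFinset hnodup).mpr ⟨hcycles, hdisj, rfl⟩
    set π := L.prod with hπ
    -- singleton-orbit helper
    have fixed_orbit : ∀ x : Fin n, π x = x → ∀ z, π.SameCycle x z → z = x := by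
      rintro x hx z ⟨k, rfl⟩
      exact zpow_apply_eq_self_of_apply_eq_self hx k
    constructor
    · intro x y hxy
      by_cases hx : π x = x
      · intro a ha b hb c hc d hd hab hcd
        rw [fixed_orbit x hx a ha, fixed_orbit x hx b hb] at hab
        exact absurd hab (lt_irrefl x)
      by_cases hy : π y = y
      · intro a ha b hb c hc d hd hab hcd
        rw [fixed_orbit y hy c hc, fixed_orbit y hy d hd] at hcd
        exact absurd hcd (lt_irrefl y)
      · have hxs : x ∈ π.support := mem_support.mpr hx
        have hys : y ∈ π.support := mem_support.mpr hy
        have hcx : π.cycleOf x ∈ π.cycleFactorsFinset := cycleOf_mem_cycleFactorsFinset_iff.mpr hxs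
        have hcy : π.cycleOf y ∈ π.cycleFactorsFinset := cycleOf_mem_cycleFactorsFinset_iff.mpr hys
        have hne : π.cycleOf x ≠ π.cycleOf y := by
          intro he
          apply hxy
          have : y ∈ (π.cycleOf y).support :=
            mem_support_cycleOf_iff.mpr ⟨SameCycle.refl _ _, hys⟩
          rw [← he, mem_support_cycleOf_iff] at this
          exact this.1
        have hrel := (haveI : Std.Symm (fun c d : Equiv.Perm (Fin n) => NonInterlacingS {x | c x ≠ x} {x | d x ≠ x}) := ⟨fun a b h => NonInterlacingS.symm' h⟩; hpair.forall) (List.mem_toFinset.mp (hfact ▸ hcx))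
          (List.mem_toFinset.mp (hfact ▸ hcy)) hne
        have e1 : {z | π.SameCycle x z} = {z | π.cycleOf x z ≠ z} := by
          ext z
          rw [Set.mem_setOf_eq, Set.mem_setOf_eq, ← mem_support, mem_support_cycleOf_iff' hx]
        have e2 : {z | π.SameCycle y z} = {z | π.cycleOf y z ≠ z} := by
          ext z
          rw [Set.mem_setOf_eq, Set.mem_setOf_eq, ← mem_support, mem_support_cycleOf_iff' hy]
        rw [e1, e2]
        exact hrel
    · intro x
      by_cases hx : π x = x
      · exact Or.inl hx
      · have hxs : x ∈ π.support := mem_support.mpr hx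
        have hcx : π.cycleOf x ∈ π.cycleFactorsFinset := cycleOf_mem_cycleFactorsFinset_iff.mpr hxs
        have hxc : x ∈ (π.cycleOf x).support :=
          mem_support_cycleOf_iff.mpr ⟨SameCycle.refl _ _, hxs⟩
        obtain ⟨h1, h2⟩ := factor_props hcx hxc
        have hmem : π.cycleOf x ∈ L := List.mem_toFinset.mp (hfact ▸ hcx)
        exact desc_at_transfer h1.symm (fun y => (h2 y).symm) ((hdesc _ hmem).2 x)
  · rintro ⟨horb, hdesc⟩
    refine ⟨π.cycleFactorsFinset.toList, ?_, ?_, ?_⟩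
    · intro c hc
      have hc' : c ∈ π.cycleFactorsFinset := Finset.mem_toList.mp hc
      have hcyc : c.IsCycle := (mem_cycleFactorsFinset_iff.mp hc').1
      refine ⟨hcyc, fun x => ?_⟩
      by_cases hcx : c x = x
      · exact Or.inl hcx
      · obtain ⟨h1, h2⟩ := factor_props hc' (mem_support.mpr hcx)
        exact desc_at_transfer h1 h2 (hdesc x)
    · refine (Finset.nodup_toList _).imp_of_mem (fun {c d} hc hd hne => ?_)
      have hc' : c ∈ π.cycleFactorsFinset := Finset.mem_toList.mp hc
      have hd' : d ∈ π.cycleFactorsFinset := Finset.mem_toList.mp hd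
      have hcyc : c.IsCycle := (mem_cycleFactorsFinset_iff.mp hc').1
      have hdyc : d.IsCycle := (mem_cycleFactorsFinset_iff.mp hd').1
      obtain ⟨x, hxc⟩ := hcyc.nonempty_support
      obtain ⟨y, hyd⟩ := hdyc.nonempty_support
      have hnsc : ¬π.SameCycle x y := by
        intro hsc
        apply hne
        rw [cycle_is_cycleOf hxc hc', cycle_is_cycleOf hyd hd', hsc.cycleOf_eq]
      have e1 : {z | π.SameCycle x z} = {z | c z ≠ z} := by
        ext z
        rw [Set.mem_setOf_eq, Set.mem_setOf_eq, (factor_props hc' hxc).2 z,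
          sameCycle_iff_mem_support hcyc hxc z, mem_support]
      have e2 : {z | π.SameCycle y z} = {z | d z ≠ z} := by
        ext z
        rw [Set.mem_setOf_eq, Set.mem_setOf_eq, (factor_props hd' hyd).2 z,
          sameCycle_iff_mem_support hdyc hyd z, mem_support]
      have := horb x y hnsc
      rwa [e1, e2] at this
    · exact ((cycleFactorsFinset_eq_list_toFinset (Finset.nodup_toList _)).mp
        (by rw [Finset.toList_toFinset])).2.2
end
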